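/- arXiv:1001.1766 — 7 statements merged into one kernel-verified Lean document; each statement's English description precedes it below -/
import Mathlib

section
/- Let 𝕂 be a field of characteristic zero and let δ = ∂/∂X + Y·∂/∂Y acting on 𝕂[X,Y]. Let M be a positive integer and D₀, D₁, S₁, …, S_M natural numbers satisfying S₁ + ⋯ + S_M > (D₀ + M)(D₁ + 1) − M. Let (ζ₁, η₁), …, (ζ_M, η_M) be pairs in 𝕂 × 𝕂* such that ζ₁, …, ζ_M are pairwise distinct. Then there is no nonzero polynomial P ∈ 𝕂[X,Y] of degree ≤ D₀ in X and degree ≤ D₁ in Y such that δ^σ P(ζ_κ, η_κ) = 0 for all σ, κ with 0 ≤ σ < S_κ and 1 ≤ κ ≤ M. -/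
/-!
Write `P = ∑ⱼ qⱼ(X) Yʲ` and let `J` be the set of the `n ≤ D₁ + 1` exponents with `qⱼ ≠ 0`.
Since `t ↦ (ζ + t, η eᵗ)` is an integral curve of `δ`, the conditions at `(ζ, η)` say that the
exponential polynomial `∑ⱼ qⱼ(ζ + t) ηʲ e^{jt}` vanishes to order `S` at `t = 0`.
The Wronskian of the functions `qⱼ(x) e^{jx}`, `j ∈ J`, is `e^{(∑ j) x} W(x)` for a polynomial `W`
of degree at most `n D₀`, and `W ≠ 0` because its top coefficient is a Vandermonde determinant in
the distinct frequencies `j`. Adding all rows of the Wronskian matrix to one of them shows that `W`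
vanishes to order at least `S_κ - (n - 1)` at each `ζ_κ`. Hence
`∑ S_κ ≤ n D₀ + M (n - 1) ≤ (D₀ + M)(D₁ + 1) - M`.
-/

open MvPolynomial

/-- The derivation `δ = ∂/∂X + Y ∂/∂Y` on `𝕂[X,Y]`, where `X` is variable `0` and `Y` is
variable `1`. -/
noncomputable def deltaOp (𝕂 : Type*) [CommSemiring 𝕂] (P : MvPolynomial (Fin 2) 𝕂) :
    MvPolynomial (Fin 2) 𝕂 :=
  pderiv 0 P + X 1 * pderiv 1 P

open scoped PowerSeries

namespace Polynomial

variable {R : Type*} [CommRing R]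

theorem coeff_prod_sum_of_natDegree_le {ι : Type*} (s : Finset ι) (f : ι → R[X]) (d : ι → ℕ)
    (h : ∀ i ∈ s, (f i).natDegree ≤ d i) :
    (∏ i ∈ s, f i).coeff (∑ i ∈ s, d i) = ∏ i ∈ s, (f i).coeff (d i) := by
  classical
  induction s using Finset.induction_on with
  | empty => simp
  | insert a s ha ih =>
    have hs : ∀ i ∈ s, (f i).natDegree ≤ d i := fun i hi => h i (Finset.mem_insert_of_mem hi)
    rw [Finset.prod_insert ha, Finset.sum_insert ha, Finset.prod_insert ha,
      coeff_mul_add_eq_of_natDegree_le (h a (Finset.mem_insert_self a s))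
        ((natDegree_prod_le _ _).trans (Finset.sum_le_sum hs)), ih hs]

section Determinant

variable {ι : Type*} [Fintype ι] [DecidableEq ι]

theorem natDegree_det_le (A : Matrix ι ι R[X]) (d : ι → ℕ)
    (h : ∀ a b, (A a b).natDegree ≤ d a) : A.det.natDegree ≤ ∑ a, d a := by
  rw [Matrix.det_apply']
  refine natDegree_sum_le_of_forall_le _ _ fun σ _ => ?_
  rw [← Equiv.sum_comp σ d, ← C_eq_intCast]
  exact (natDegree_C_mul_le _ _).trans
    ((natDegree_prod_le _ _).trans (Finset.sum_le_sum fun b _ => h (σ b) b))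

theorem coeff_det_sum_of_natDegree_le (A : Matrix ι ι R[X]) (d : ι → ℕ)
    (h : ∀ a b, (A a b).natDegree ≤ d a) :
    A.det.coeff (∑ a, d a) = (Matrix.of fun a b => (A a b).coeff (d a)).det := by
  rw [Matrix.det_apply', Matrix.det_apply', finsetSum_coeff]
  refine Finset.sum_congr rfl fun σ _ => ?_
  rw [← Equiv.sum_comp σ d, coeff_intCast_mul,
    coeff_prod_sum_of_natDegree_le _ _ _ fun b _ => h (σ b) b]
  rfl

end Determinant

/-- `(u(x) e^{cx})' = (twistedDerivative c u)(x) e^{cx}`. -/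
noncomputable def twistedDerivative (c : R) (u : R[X]) : R[X] :=
  derivative u + C c * u

theorem natDegree_iterate_twistedDerivative_le (c : R) (u : R[X]) (i : ℕ) :
    ((twistedDerivative c)^[i] u).natDegree ≤ u.natDegree := by
  induction i with
  | zero => rfl
  | succ i ih =>
    rw [Function.iterate_succ_apply']
    exact (natDegree_add_le _ _).trans (max_le ((natDegree_derivative_le _).trans
      (Nat.sub_le_of_le_add (by omega))) ((natDegree_C_mul_le _ _).trans ih))

theorem coeff_iterate_twistedDerivative_natDegree (c : R) (u : R[X]) (i : ℕ) :
    ((twistedDerivative c)^[i] u).coeff u.natDegree = c ^ i * u.leadingCoeff := by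
  induction i with
  | zero => simp
  | succ i ih =>
    have hder : (derivative ((twistedDerivative c)^[i] u)).coeff u.natDegree = 0 := by
      rw [coeff_derivative, coeff_eq_zero_of_natDegree_lt
        ((natDegree_iterate_twistedDerivative_le c u i).trans_lt u.natDegree.lt_succ_self),
        zero_mul]
    rw [Function.iterate_succ_apply', twistedDerivative, coeff_add, hder, coeff_C_mul, ih,
      pow_succ]
    ring

/-- Its determinant times `e^{(∑ cₐ) x}` is the Wronskian of the functions `pₐ(x) e^{cₐ x}`. -/
noncomputable def wronskianMatrix {n : ℕ} (c : Fin n → R) (p : Fin n → R[X]) :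
    Matrix (Fin n) (Fin n) R[X] :=
  Matrix.of fun a b => (twistedDerivative (c a))^[b] (p a)

theorem natDegree_det_wronskianMatrix_le {n : ℕ} (c : Fin n → R) (p : Fin n → R[X]) :
    (wronskianMatrix c p).det.natDegree ≤ ∑ a, (p a).natDegree :=
  natDegree_det_le (wronskianMatrix c p) (fun a => (p a).natDegree) fun _ _ =>
    natDegree_iterate_twistedDerivative_le _ _ _

theorem det_wronskianMatrix_ne_zero [IsDomain R] {n : ℕ} {c : Fin n → R} {p : Fin n → R[X]}
    (hc : Function.Injective c) (hp : ∀ a, p a ≠ 0) : (wronskianMatrix c p).det ≠ 0 := by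
  have htop : (wronskianMatrix c p).det.coeff (∑ a, (p a).natDegree)
      = (∏ a, (p a).leadingCoeff) * (Matrix.vandermonde c).det := by
    rw [coeff_det_sum_of_natDegree_le (wronskianMatrix c p) (fun a => (p a).natDegree) fun _ _ =>
        natDegree_iterate_twistedDerivative_le _ _ _,
      ← Matrix.det_mul_column]
    congr 1
    ext a b
    simp [wronskianMatrix, coeff_iterate_twistedDerivative_natDegree, mul_comm]
  refine fun h => ?_
  rw [h, coeff_zero, eq_comm] at htop
  exact mul_ne_zero (Finset.prod_ne_zero_iff.mpr fun a _ => leadingCoeff_ne_zero.mpr (hp a))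
    (Matrix.det_vandermonde_ne_zero_iff.mpr hc) htop

end Polynomial

theorem Matrix.dvd_det_of_forall_dvd_sum_apply {R : Type*} [CommRing R] {ι : Type*} [Fintype ι]
    [DecidableEq ι] [Nonempty ι] (A : Matrix ι ι R) {x : R} (h : ∀ b, x ∣ ∑ a, A a b) :
    x ∣ A.det := by
  obtain ⟨a₀⟩ := ‹Nonempty ι›
  choose v hv using h
  have hrows : ∑ a, (1 : R) • A a = x • v := by
    ext b
    exact (Finset.sum_apply b _ fun a => (1 : R) • A a).trans (by simpa using hv b)
  have := A.det_updateRow_sum a₀ fun _ => 1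
  rw [hrows, det_updateRow_smul, one_smul] at this
  exact ⟨_, this.symm⟩

namespace PowerSeries

variable {R : Type*} [CommRing R]

theorem X_pow_sub_dvd_iterate_derivative {f : R⟦X⟧} {s : ℕ} (h : X ^ s ∣ f) (i : ℕ) :
    X ^ (s - i) ∣ (d⁄dX R)^[i] f := by
  rw [X_pow_dvd_iff] at h ⊢
  intro k hk
  rw [coeff_iterate_derivative, h (k + i) (by omega), mul_zero]

noncomputable def taylorSeries (ζ : R) : Polynomial R →ₐ[R] R⟦X⟧ :=
  (Polynomial.coeToPowerSeries.algHom R).comp (Polynomial.taylorAlgHom ζ)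

theorem taylorSeries_apply (ζ : R) (r : Polynomial R) :
    taylorSeries ζ r = (Polynomial.taylor ζ r : R⟦X⟧) := by
  simp [taylorSeries]

theorem taylorSeries_X (ζ : R) : taylorSeries ζ Polynomial.X = X + C ζ := by
  simp [taylorSeries_apply]

theorem taylorSeries_C (ζ c : R) : taylorSeries ζ (Polynomial.C c) = C c := by
  simp [taylorSeries_apply]

theorem derivative_taylorSeries (ζ : R) (r : Polynomial R) :
    d⁄dX R (taylorSeries ζ r) = taylorSeries ζ (Polynomial.derivative r) := by
  simp [taylorSeries_apply, derivative_coe, Polynomial.taylor_apply, Polynomial.derivative_comp]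

theorem X_sub_C_pow_dvd_of_X_pow_dvd_taylorSeries {ζ : R} {r : Polynomial R} {m : ℕ}
    (h : X ^ m ∣ taylorSeries ζ r) : (Polynomial.X - Polynomial.C ζ) ^ m ∣ r := by
  have hX : Polynomial.X ^ m ∣ Polynomial.taylor ζ r := by
    rw [Polynomial.X_pow_dvd_iff]
    intro i hi
    simpa [taylorSeries_apply] using X_pow_dvd_iff.mp h i hi
  simpa [Polynomial.taylor_taylor, Polynomial.taylor_X, sub_eq_add_neg] using
    map_dvd (Polynomial.taylorAlgHom (-ζ)) hX

theorem derivative_taylorSeries_mul {c : R} {E : R⟦X⟧} (hE : d⁄dX R E = C c * E) (ζ : R)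
    (r : Polynomial R) :
    d⁄dX R (taylorSeries ζ r * E) = taylorSeries ζ (Polynomial.twistedDerivative c r) * E := by
  rw [Derivation.leibniz, hE, derivative_taylorSeries, Polynomial.twistedDerivative, map_add,
    map_mul, taylorSeries_C, smul_eq_mul, smul_eq_mul]
  ring

end PowerSeries

namespace Polynomial

variable {R : Type*} [CommRing R]

theorem iterate_derivative_sum_taylorSeries_mul {n : ℕ} (c : Fin n → R) (p : Fin n → R[X])
    (ζ : R) {E : Fin n → PowerSeries R} (hE : ∀ a, d⁄dX R (E a) = PowerSeries.C (c a) * E a)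
    (i : ℕ) :
    (d⁄dX R)^[i] (∑ a, PowerSeries.taylorSeries ζ (p a) * E a)
      = ∑ a, PowerSeries.taylorSeries ζ ((twistedDerivative (c a))^[i] (p a)) * E a := by
  induction i with
  | zero => rfl
  | succ i ih =>
    simp only [Function.iterate_succ_apply', ih, map_sum,
      PowerSeries.derivative_taylorSeries_mul (hE _)]

theorem X_sub_C_pow_dvd_det_wronskianMatrix {n : ℕ} [NeZero n] (c : Fin n → R)
    (p : Fin n → R[X]) (ζ : R) {E : Fin n → PowerSeries R} (hE_unit : ∀ a, IsUnit (E a))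
    (hE : ∀ a, d⁄dX R (E a) = PowerSeries.C (c a) * E a) {s : ℕ}
    (hs : PowerSeries.X ^ s ∣ ∑ a, PowerSeries.taylorSeries ζ (p a) * E a) :
    (X - C ζ) ^ (s - (n - 1)) ∣ (wronskianMatrix c p).det := by
  set A : Matrix (Fin n) (Fin n) (PowerSeries R) :=
    Matrix.of fun a b => E a * PowerSeries.taylorSeries ζ (wronskianMatrix c p a b)
  have hdet : A.det = (∏ a, E a) * PowerSeries.taylorSeries ζ (wronskianMatrix c p).det := by
    rw [AlgHom.map_det]
    exact Matrix.det_mul_column E _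
  have hcol (b : Fin n) : PowerSeries.X ^ (s - (n - 1)) ∣ ∑ a, A a b := by
    have : ∑ a, A a b = (d⁄dX R)^[b] (∑ a, PowerSeries.taylorSeries ζ (p a) * E a) := by
      rw [iterate_derivative_sum_taylorSeries_mul c p ζ hE]
      exact Finset.sum_congr rfl fun a _ => mul_comm _ _
    rw [this]
    exact (pow_dvd_pow _ (by omega)).trans (PowerSeries.X_pow_sub_dvd_iterate_derivative hs b)
  refine PowerSeries.X_sub_C_pow_dvd_of_X_pow_dvd_taylorSeries
    ((IsUnit.dvd_mul_left (IsUnit.prod_univ_iff.mpr hE_unit)).mp ?_)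
  rw [← hdet]
  exact Matrix.dvd_det_of_forall_dvd_sum_apply A hcol

theorem sum_le_sum_natDegree_add_of_X_pow_dvd {K : Type*} [Field K] {n M : ℕ} [NeZero n]
    {c : Fin n → K} (hc : Function.Injective c) {p : Fin n → K[X]} (hp : ∀ a, p a ≠ 0)
    {ζ : Fin M → K} (hζ : Function.Injective ζ) {E : Fin M → Fin n → PowerSeries K}
    (hE_unit : ∀ κ a, IsUnit (E κ a))
    (hE : ∀ κ a, d⁄dX K (E κ a) = PowerSeries.C (c a) * E κ a) {S : Fin M → ℕ}
    (hS : ∀ κ, PowerSeries.X ^ S κ ∣ ∑ a, PowerSeries.taylorSeries (ζ κ) (p a) * E κ a) :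
    ∑ κ, S κ ≤ ∑ a, (p a).natDegree + M * (n - 1) := by
  have hdvd : ∏ κ, (X - C (ζ κ)) ^ (S κ - (n - 1)) ∣ (wronskianMatrix c p).det :=
    Finset.prod_dvd_of_coprime
      (fun κ _ κ' _ hne => (isCoprime_X_sub_C_of_isUnit_sub
        (sub_ne_zero.mpr (hζ.ne hne)).isUnit).pow)
      fun κ _ => X_sub_C_pow_dvd_det_wronskianMatrix c p (ζ κ) (hE_unit κ) (hE κ) (hS κ)
  have hdeg : ∑ κ, (S κ - (n - 1)) ≤ ∑ a, (p a).natDegree :=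
    calc ∑ κ, (S κ - (n - 1)) = (∏ κ, (X - C (ζ κ)) ^ (S κ - (n - 1))).natDegree := by
          rw [natDegree_prod _ _ fun κ _ => pow_ne_zero _ (X_sub_C_ne_zero _)]
          simp
      _ ≤ (wronskianMatrix c p).det.natDegree :=
          natDegree_le_of_dvd hdvd (det_wronskianMatrix_ne_zero hc hp)
      _ ≤ ∑ a, (p a).natDegree := natDegree_det_wronskianMatrix_le c p
  calc ∑ κ, S κ ≤ ∑ κ, ((S κ - (n - 1)) + (n - 1)) := Finset.sum_le_sum fun κ _ => le_tsub_add
    _ = ∑ κ, (S κ - (n - 1)) + M * (n - 1) := by simp [Finset.sum_add_distrib]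
    _ ≤ ∑ a, (p a).natDegree + M * (n - 1) := by gcongr

end Polynomial

section Bivariate

variable {R : Type*} [CommSemiring R]

noncomputable def toBivariate : MvPolynomial (Fin 2) R →ₐ[R] Polynomial (Polynomial R) :=
  aeval ![Polynomial.C Polynomial.X, Polynomial.X]

theorem coeff_coeff_toBivariate (P : MvPolynomial (Fin 2) R) (i j : ℕ) :
    ((toBivariate P).coeff j).coeff i = P.coeff (Finsupp.single 0 i + Finsupp.single 1 j) := by
  induction P using MvPolynomial.induction_on' with
  | monomial m a =>
    have hm : toBivariate (monomial m a)
        = Polynomial.monomial (m 1) (Polynomial.monomial (m 0) a) := by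
      rw [toBivariate, aeval_monomial, Finsupp.prod_fintype _ _ fun _ => pow_zero _,
        Fin.prod_univ_two]
      simp only [Matrix.cons_val_zero, Matrix.cons_val_one]
      rw [← Polynomial.C_mul_X_pow_eq_monomial, ← Polynomial.C_mul_X_pow_eq_monomial,
        Polynomial.C_mul, Polynomial.C_pow, Polynomial.algebraMap_apply,
        Polynomial.algebraMap_apply, Algebra.algebraMap_self, RingHom.id_apply, mul_assoc]
    simp only [hm, Polynomial.coeff_monomial, coeff_monomial, Finsupp.ext_iff, Fin.forall_fin_two]
    split_ifs <;> simp_all [Polynomial.coeff_monomial]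
  | add P Q hP hQ => simp [hP, hQ]

theorem toBivariate_injective :
    Function.Injective (toBivariate : MvPolynomial (Fin 2) R →ₐ[R] Polynomial (Polynomial R)) := by
  intro P Q h
  ext m
  have hm : m = Finsupp.single 0 (m 0) + Finsupp.single 1 (m 1) := by
    ext k
    fin_cases k <;> simp
  rw [hm, ← coeff_coeff_toBivariate, ← coeff_coeff_toBivariate, h]

theorem natDegree_toBivariate_le (P : MvPolynomial (Fin 2) R) :
    (toBivariate P).natDegree ≤ degreeOf 1 P := by
  refine Polynomial.natDegree_le_iff_coeff_eq_zero.mpr fun j hj => Polynomial.ext fun i => ?_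
  rw [coeff_coeff_toBivariate, Polynomial.coeff_zero, ← notMem_support_iff]
  intro hmem
  have := monomial_le_degreeOf 1 hmem
  simp at this
  omega

theorem natDegree_coeff_toBivariate_le (P : MvPolynomial (Fin 2) R) (j : ℕ) :
    ((toBivariate P).coeff j).natDegree ≤ degreeOf 0 P := by
  refine Polynomial.natDegree_le_iff_coeff_eq_zero.mpr fun i hi => ?_
  rw [coeff_coeff_toBivariate, ← notMem_support_iff]
  intro hmem
  have := monomial_le_degreeOf 0 hmem
  simp at this
  omega

end Bivariate

section DeltaOp

variable {R : Type*} [CommSemiring R]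

theorem deltaOp_add (P Q : MvPolynomial (Fin 2) R) :
    deltaOp R (P + Q) = deltaOp R P + deltaOp R Q := by
  simp only [deltaOp, map_add]
  ring

theorem deltaOp_mul (P Q : MvPolynomial (Fin 2) R) :
    deltaOp R (P * Q) = deltaOp R P * Q + P * deltaOp R Q := by
  simp only [deltaOp, Derivation.leibniz, smul_eq_mul]
  ring

end DeltaOp

section Expansion

variable {𝕂 : Type*} [Field 𝕂] [CharZero 𝕂]

noncomputable def expansionAt (ζ η : 𝕂) : MvPolynomial (Fin 2) 𝕂 →ₐ[𝕂] 𝕂⟦X⟧ :=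
  aeval ![PowerSeries.X + PowerSeries.C ζ, PowerSeries.C η * PowerSeries.exp 𝕂]

theorem derivative_C_mul_exp (η : 𝕂) :
    d⁄dX 𝕂 (PowerSeries.C η * PowerSeries.exp 𝕂) = PowerSeries.C η * PowerSeries.exp 𝕂 := by
  simp [PowerSeries.derivative_exp]

theorem expansionAt_deltaOp (ζ η : 𝕂) (P : MvPolynomial (Fin 2) 𝕂) :
    expansionAt ζ η (deltaOp 𝕂 P) = d⁄dX 𝕂 (expansionAt ζ η P) := by
  induction P using MvPolynomial.induction_on with
  | C a => simp [deltaOp, expansionAt]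
  | add P Q hP hQ => rw [deltaOp_add, map_add, hP, hQ, map_add, map_add]
  | mul_X P i hP =>
    have hX : expansionAt ζ η (deltaOp 𝕂 (X i)) = d⁄dX 𝕂 (expansionAt ζ η (X i)) := by
      fin_cases i <;> simp [deltaOp, expansionAt, pderiv_X, PowerSeries.derivative_exp]
    rw [deltaOp_mul, map_add, map_mul, map_mul, hP, hX, map_mul, Derivation.leibniz, smul_eq_mul,
      smul_eq_mul]
    ring

theorem expansionAt_iterate_deltaOp (ζ η : 𝕂) (P : MvPolynomial (Fin 2) 𝕂) (σ : ℕ) :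
    expansionAt ζ η ((deltaOp 𝕂)^[σ] P) = (d⁄dX 𝕂)^[σ] (expansionAt ζ η P) := by
  induction σ with
  | zero => rfl
  | succ σ ih => rw [Function.iterate_succ_apply', Function.iterate_succ_apply',
      expansionAt_deltaOp, ih]

theorem constantCoeff_expansionAt (ζ η : 𝕂) (P : MvPolynomial (Fin 2) 𝕂) :
    PowerSeries.constantCoeff (expansionAt ζ η P) = eval ![ζ, η] P := by
  rw [expansionAt, map_aeval]
  congr 2
  ext i
  fin_cases i <;> simp

theorem X_pow_dvd_expansionAt {ζ η : 𝕂} {P : MvPolynomial (Fin 2) 𝕂} {s : ℕ}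
    (h : ∀ σ < s, eval ![ζ, η] ((deltaOp 𝕂)^[σ] P) = 0) :
    PowerSeries.X ^ s ∣ expansionAt ζ η P := by
  refine PowerSeries.X_pow_dvd_iff.mpr fun m hm => ?_
  have := PowerSeries.constantCoeff_iterate_derivative (expansionAt ζ η P) m
  rw [← expansionAt_iterate_deltaOp, constantCoeff_expansionAt, h m hm, eq_comm] at this
  exact (mul_eq_zero.mp this).resolve_left (Nat.cast_ne_zero.mpr m.factorial_ne_zero)

theorem expansionAt_eq_eval₂_toBivariate (ζ η : 𝕂) (P : MvPolynomial (Fin 2) 𝕂) :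
    expansionAt ζ η P = (toBivariate P).eval₂ (PowerSeries.taylorSeries ζ)
      (PowerSeries.C η * PowerSeries.exp 𝕂) := by
  have : (Polynomial.eval₂AlgHom (PowerSeries.taylorSeries ζ)
      (PowerSeries.C η * PowerSeries.exp 𝕂) fun _ => Commute.all _ _).comp toBivariate
      = expansionAt ζ η := by
    refine MvPolynomial.algHom_ext fun i => ?_
    fin_cases i <;> simp [toBivariate, expansionAt, PowerSeries.taylorSeries_X]
  exact (DFunLike.congr_fun this P).symm

theorem derivative_C_mul_exp_pow (η : 𝕂) (j : ℕ) :
    d⁄dX 𝕂 ((PowerSeries.C η * PowerSeries.exp 𝕂) ^ j)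
      = PowerSeries.C (j : 𝕂) * (PowerSeries.C η * PowerSeries.exp 𝕂) ^ j := by
  rw [PowerSeries.derivative_pow, derivative_C_mul_exp, map_natCast]
  cases j with
  | zero => simp
  | succ j => rw [mul_assoc, ← pow_succ, Nat.add_sub_cancel]

theorem sum_le_of_iterate_deltaOp_eval_eq_zero {M : ℕ} {P : MvPolynomial (Fin 2) 𝕂} (hP : P ≠ 0)
    {ζ η : Fin M → 𝕂} (hη : ∀ κ, η κ ≠ 0) (hζ : Function.Injective ζ) {S : Fin M → ℕ}
    (h : ∀ κ, ∀ σ < S κ, eval ![ζ κ, η κ] ((deltaOp 𝕂)^[σ] P) = 0) :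
    ∑ κ, S κ ≤ (degreeOf 1 P + 1) * degreeOf 0 P + M * degreeOf 1 P := by
  set q := toBivariate P
  set J := q.support
  set e : Fin J.card → ℕ := fun a => J.equivFin.symm a
  have : NeZero J.card := ⟨(Finset.card_pos.mpr (Polynomial.support_nonempty.mpr
    ((map_ne_zero_iff _ toBivariate_injective).mpr hP))).ne'⟩
  have hcard : J.card ≤ degreeOf 1 P + 1 :=
    (Finset.card_le_card Polynomial.supp_subset_range_natDegree_succ).trans
      (by simpa using natDegree_toBivariate_le P)
  have hsum (κ : Fin M) : expansionAt (ζ κ) (η κ) P = ∑ a, PowerSeries.taylorSeries (ζ κ)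
      (q.coeff (e a)) * (PowerSeries.C (η κ) * PowerSeries.exp 𝕂) ^ e a := by
    rw [expansionAt_eq_eval₂_toBivariate, Polynomial.eval₂_eq_sum, Polynomial.sum_def,
      ← Finset.sum_coe_sort J, ← Equiv.sum_comp J.equivFin.symm]
    rfl
  have hestimate := Polynomial.sum_le_sum_natDegree_add_of_X_pow_dvd
    (c := fun a => (e a : 𝕂)) (Nat.cast_injective.comp
      (Subtype.val_injective.comp J.equivFin.symm.injective))
    (fun a => Polynomial.mem_support_iff.mp (J.equivFin.symm a).2) hζ
    (fun κ a => (PowerSeries.isUnit_iff_constantCoeff.mpr (by simp [hη κ])).pow _)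
    (fun κ a => derivative_C_mul_exp_pow (η κ) (e a))
    (fun κ => hsum κ ▸ X_pow_dvd_expansionAt (h κ))
  have hdeg : ∑ a, (q.coeff (e a)).natDegree ≤ J.card * degreeOf 0 P :=
    (Finset.sum_le_sum fun a _ => natDegree_coeff_toBivariate_le P (e a)).trans (by simp)
  calc ∑ κ, S κ ≤ J.card * degreeOf 0 P + M * (J.card - 1) := hestimate.trans (by gcongr)
    _ ≤ (degreeOf 1 P + 1) * degreeOf 0 P + M * degreeOf 1 P := by
      gcongr
      omega

end Expansion

theorem stmt2_general (𝕂 : Type*) [Field 𝕂] [CharZero 𝕂] (M : ℕ)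
    (D₀ D₁ : ℕ) (S : Fin M → ℕ)
    (hS : (((D₀ + M) * (D₁ + 1) : ℕ) : ℤ) - (M : ℤ) < ((∑ κ, S κ : ℕ) : ℤ))
    (ζ η : Fin M → 𝕂) (hη : ∀ κ, η κ ≠ 0) (hζ : Function.Injective ζ) :
    ¬ ∃ P : MvPolynomial (Fin 2) 𝕂, P ≠ 0 ∧ degreeOf 0 P ≤ D₀ ∧ degreeOf 1 P ≤ D₁ ∧
        ∀ (κ : Fin M) (σ : ℕ), σ < S κ →
          eval ![ζ κ, η κ] ((deltaOp 𝕂)^[σ] P) = 0 := by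
  rintro ⟨P, hP, hD₀, hD₁, hvanish⟩
  have hbound : ∑ κ, S κ ≤ (D₁ + 1) * D₀ + M * D₁ :=
    (sum_le_of_iterate_deltaOp_eval_eq_zero hP hη hζ hvanish).trans (by gcongr)
  have : (((D₀ + M) * (D₁ + 1) : ℕ) : ℤ) - M = (((D₁ + 1) * D₀ + M * D₁ : ℕ) : ℤ) := by
    push_cast
    ring
  omega

theorem stmt2 (𝕂 : Type*) [Field 𝕂] [CharZero 𝕂] (M : ℕ) (hM : 0 < M)
    (D₀ D₁ : ℕ) (S : Fin M → ℕ)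
    (hS : (((D₀ + M) * (D₁ + 1) : ℕ) : ℤ) - (M : ℤ) < ((∑ κ, S κ : ℕ) : ℤ))
    (ζ η : Fin M → 𝕂) (hη : ∀ κ, η κ ≠ 0) (hζ : Function.Injective ζ) :
    ¬ ∃ P : MvPolynomial (Fin 2) 𝕂, P ≠ 0 ∧ degreeOf 0 P ≤ D₀ ∧ degreeOf 1 P ≤ D₁ ∧
        ∀ (κ : Fin M) (σ : ℕ), σ < S κ →
          eval ![ζ κ, η κ] ((deltaOp 𝕂)^[σ] P) = 0 :=
  stmt2_general 𝕂 M D₀ D₁ S hS ζ η hη hζ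
end

section
/- For every natural number ν, Σ_{j=0}^{ν} j!·|λ_{j,ν}| ≤ 2^ν. -/
open Polynomial

/-- The Fel'dman polynomial `ℱ_ν(z) = z(z−1)⋯(z−ν+1)/ν!` (equal to `1` for `ν = 0`). -/
noncomputable def feldman (ν : ℕ) : Polynomial ℚ :=
  (ν.factorial : ℚ)⁻¹ • ∏ i ∈ Finset.range ν, (X - C (i : ℚ))

/-!
`ν! ℱ_ν` is the falling factorial `descPochhammer ℚ ν`, whose coefficients are, up to sign,
those of the rising factorial `x^{(ν)} = x(x+1)⋯(x+ν-1)`, which are natural numbers. So the sum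
is `M(x^{(ν)}) / ν!` for the linear functional `M(x^j) = j!` on `ℕ[X]`. Multiplying a polynomial
of degree `n` by `x` multiplies `M` by at most `n + 1`, hence `M(p · (x + n)) ≤ (2n + 1) M(p)`,
and by induction `M(x^{(ν)}) ≤ 2^ν ν!`.
-/

open Nat

theorem descPochhammer_eq_prod_range (R : Type*) [CommRing R] (n : ℕ) :
    descPochhammer R n = ∏ i ∈ Finset.range n, (X - C (i : R)) := by
  induction n with
  | zero => simp
  | succ n ih => simp [descPochhammer_succ_right, Finset.prod_range_succ, ih]

theorem coeff_descPochhammer (R : Type*) [CommRing R] (n j : ℕ) :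
    (descPochhammer R n).coeff j = (-1) ^ (n + j) * (ascPochhammer R n).coeff j := by
  induction n generalizing j with
  | zero => rcases j with _ | j <;> simp [coeff_one]
  | succ n ih =>
    rcases j with _ | j
    · simp [descPochhammer_succ_right, ascPochhammer_succ_right, mul_sub, mul_add, ih]
      ring
    · simp [descPochhammer_succ_right, ascPochhammer_succ_right, mul_sub, mul_add, coeff_mul_X, ih]
      ring

theorem abs_coeff_descPochhammer (R : Type*) [CommRing R] [LinearOrder R] [IsStrictOrderedRing R]
    (n j : ℕ) : |(descPochhammer R n).coeff j| = (ascPochhammer ℕ n).coeff j := by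
  rw [coeff_descPochhammer, ← ascPochhammer_map (Nat.castRingHom R), coeff_map]
  simp

namespace Polynomial

noncomputable def factorialMoment (p : ℕ[X]) : ℕ := p.sum fun j a => j ! * a

theorem factorialMoment_add (p q : ℕ[X]) :
    factorialMoment (p + q) = factorialMoment p + factorialMoment q :=
  sum_add_index _ _ _ (fun _ => mul_zero _) fun _ _ _ => mul_add _ _ _

theorem factorialMoment_smul (n : ℕ) (p : ℕ[X]) :
    factorialMoment (n • p) = n * factorialMoment p := by
  rw [factorialMoment, sum_smul_index _ _ _ fun _ => mul_zero _, factorialMoment, sum_def, sum_def,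
    Finset.mul_sum]
  exact Finset.sum_congr rfl fun _ _ => by ring

theorem factorialMoment_mul_X (p : ℕ[X]) :
    factorialMoment (p * X) = p.sum fun j a => (j + 1)! * a := by
  induction p using Polynomial.induction_on' with
  | add p q hp hq =>
    rw [add_mul, factorialMoment_add, hp, hq,
      sum_add_index _ _ _ (fun _ => mul_zero _) fun _ _ _ => mul_add _ _ _]
  | monomial n a =>
    simp only [factorialMoment, monomial_mul_X, sum_monomial_index, mul_zero]

theorem factorialMoment_mul_X_le (p : ℕ[X]) :
    factorialMoment (p * X) ≤ (p.natDegree + 1) * factorialMoment p := by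
  rw [factorialMoment_mul_X, factorialMoment, sum_def, sum_def, Finset.mul_sum]
  refine Finset.sum_le_sum fun j hj => ?_
  have hj : j ≤ p.natDegree := le_natDegree_of_mem_supp j hj
  rw [factorial_succ, ← mul_assoc]
  gcongr

theorem factorialMoment_ascPochhammer_le (n : ℕ) :
    factorialMoment (ascPochhammer ℕ n) ≤ 2 ^ n * n ! := by
  induction n with
  | zero =>
    rw [ascPochhammer_zero, factorialMoment, ← C_1,
      sum_C_index (f := fun j a => j ! * a) (mul_zero _)]
    simp
  | succ n ih =>
    have hstep : factorialMoment (ascPochhammer ℕ (n + 1))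
        ≤ (2 * n + 1) * factorialMoment (ascPochhammer ℕ n) := by
      rw [ascPochhammer_succ_right, mul_add, factorialMoment_add, ← nsmul_eq_mul',
        factorialMoment_smul]
      have hX := factorialMoment_mul_X_le (ascPochhammer ℕ n)
      rw [ascPochhammer_natDegree] at hX
      linarith
    calc factorialMoment (ascPochhammer ℕ (n + 1))
        ≤ (2 * n + 1) * factorialMoment (ascPochhammer ℕ n) := hstep
      _ ≤ 2 * (n + 1) * (2 ^ n * n !) := by gcongr; omega
      _ = 2 ^ (n + 1) * (n + 1)! := by rw [factorial_succ]; ring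

end Polynomial

theorem stmt4 (ν : ℕ) :
    ∑ j ∈ Finset.range (ν + 1), (j.factorial : ℚ) * |(feldman ν).coeff j| ≤ 2 ^ ν := by
  have hfeldman : feldman ν = (ν ! : ℚ)⁻¹ • descPochhammer ℚ ν := by
    rw [feldman, descPochhammer_eq_prod_range]
  have hsum : ∑ j ∈ Finset.range (ν + 1), (j ! : ℚ) * |(feldman ν).coeff j|
      = (ν ! : ℚ)⁻¹ * factorialMoment (ascPochhammer ℕ ν) := by
    rw [factorialMoment, sum_over_range' _ (fun _ => mul_zero _) (ν + 1)
      (by rw [ascPochhammer_natDegree]; omega)]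
    simp only [hfeldman, coeff_smul, smul_eq_mul, abs_mul, abs_coeff_descPochhammer, abs_inv,
      Nat.abs_cast, Finset.mul_sum, cast_sum, cast_mul, mul_left_comm]
  rw [hsum, inv_mul_le_iff₀ (by positivity), mul_comm]
  exact_mod_cast factorialMoment_ascPochhammer_le ν
end

section
/- Let k and ν be natural numbers. For every integer ℓ and every integer u with 0 ≤ u ≤ k, the number d_ν^k · ℱ_ν^{(u)}(ℓ) is an integer, where ℱ_ν^{(u)} denotes the u-th derivative of the Fel'dman polynomial ℱ_ν. -/
/-!
Induction on `ν`. Pascal's rule `ℱ_{ν+1}(x + 1) - ℱ_{ν+1}(x) = ℱ_ν(x)` survives differentiation,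
so by the induction hypothesis and `d_ν ∣ d_{ν+1}` it suffices to treat `ℓ = 0`. There
`ℱ_{ν+1}(x) = x ℱ_ν(x - 1) / (ν + 1)` gives `ℱ_{ν+1}^{(w+1)}(0) = (w + 1) / (ν + 1) · ℱ_ν^{(w)}(-1)`;
one factor `d_{ν+1}` absorbs the denominator `ν + 1`, and the remaining `d_{ν+1}^{k-1}` is
handled by the induction hypothesis.
-/

open Polynomial

/-- `d_n = lcm(1, …, n)` (with `d_0 = 1`). -/
def dlcm (n : ℕ) : ℕ := (Finset.Icc 1 n).lcm id

namespace Polynomial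

variable {R : Type*} [CommRing R]

theorem iterate_derivative_taylor (r : R) (p : R[X]) (n : ℕ) :
    derivative^[n] (taylor r p) = taylor r (derivative^[n] p) := by
  induction n generalizing p with
  | zero => rfl
  | succ n ih =>
    rw [Function.iterate_succ_apply, Function.iterate_succ_apply, ← ih, taylor_apply,
      derivative_comp, derivative_add, derivative_X, derivative_C, add_zero, one_mul, taylor_apply]

theorem descPochhammer_succ_eq_X_mul_taylor (n : ℕ) :
    descPochhammer R (n + 1) = X * taylor (-1) (descPochhammer R n) := by
  rw [descPochhammer_succ_left, taylor_apply, C_neg, C_1, ← sub_eq_add_neg]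

theorem taylor_one_descPochhammer_succ (n : ℕ) :
    taylor 1 (descPochhammer R (n + 1)) =
      descPochhammer R (n + 1) + ((n : R) + 1) • descPochhammer R n := by
  conv_lhs => rw [descPochhammer_succ_eq_X_mul_taylor, taylor_mul, taylor_taylor, add_neg_cancel,
    taylor_zero, taylor_X]
  rw [descPochhammer_succ_right, smul_eq_C_mul, C_add, C_1, map_natCast]
  ring

end Polynomial

theorem AddSubgroupClass.mem_of_sub_mem_of_mem_zero {G S : Type*} [AddCommGroup G] [SetLike S G]
    [AddSubgroupClass S G] {s : S} {f : ℤ → G} (h0 : f 0 ∈ s)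
    (hstep : ∀ n, f (n + 1) - f n ∈ s) (n : ℤ) : f n ∈ s := by
  induction n using Int.induction_on with
  | zero => exact h0
  | succ n ih => simpa using add_mem (hstep n) ih
  | pred n ih =>
    have h := sub_mem ih (hstep (-n - 1))
    rwa [sub_add_cancel, sub_sub_cancel] at h

theorem natCast_pow_mul_mem_of_dvd {R : Type*} [CommRing R] {s : Subring R} {a b k : ℕ} {x : R}
    (hab : a ∣ b) (hx : (a : R) ^ k * x ∈ s) : (b : R) ^ k * x ∈ s := by
  obtain ⟨c, rfl⟩ := hab
  rw [Nat.cast_mul, mul_pow, mul_right_comm]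
  exact mul_mem hx (pow_mem (natCast_mem s c) k)

theorem dvd_dlcm {m n : ℕ} (h1 : 1 ≤ m) (h2 : m ≤ n) : m ∣ dlcm n :=
  Finset.dvd_lcm (Finset.mem_Icc.2 ⟨h1, h2⟩)

theorem dlcm_dvd_dlcm_succ (n : ℕ) : dlcm n ∣ dlcm (n + 1) :=
  Finset.lcm_mono (Finset.Icc_subset_Icc_right n.le_succ)

theorem feldman_eq_smul_descPochhammer (ν : ℕ) :
    feldman ν = (ν.factorial : ℚ)⁻¹ • descPochhammer ℚ ν := by
  refine congrArg _ (Polynomial.funext fun x => ?_)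
  simp [eval_prod, descPochhammer_eval_eq_prod_range]

theorem feldman_zero : feldman 0 = 1 := by simp [feldman]

theorem feldman_succ (ν : ℕ) :
    feldman (ν + 1) = ((ν : ℚ) + 1)⁻¹ • (taylor (-1) (feldman ν) * X) := by
  rw [feldman_eq_smul_descPochhammer, feldman_eq_smul_descPochhammer,
    descPochhammer_succ_eq_X_mul_taylor, map_smul, smul_mul_assoc, smul_smul, mul_comm X,
    Nat.factorial_succ]
  push_cast
  rw [mul_inv]

theorem taylor_one_feldman_succ (ν : ℕ) :
    taylor 1 (feldman (ν + 1)) = feldman (ν + 1) + feldman ν := by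
  rw [feldman_eq_smul_descPochhammer, feldman_eq_smul_descPochhammer, map_smul,
    taylor_one_descPochhammer_succ, smul_add, smul_smul, Nat.factorial_succ]
  congr 2
  push_cast
  field_simp

theorem iterate_derivative_feldman_succ_eval_add_one (ν u : ℕ) (x : ℚ) :
    (derivative^[u] (feldman (ν + 1))).eval (x + 1) =
      (derivative^[u] (feldman (ν + 1))).eval x + (derivative^[u] (feldman ν)).eval x := by
  rw [← taylor_eval, ← iterate_derivative_taylor, taylor_one_feldman_succ, iterate_map_add,
    eval_add]

theorem iterate_derivative_feldman_succ_eval_zero (ν w : ℕ) :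
    (derivative^[w + 1] (feldman (ν + 1))).eval 0 =
      ((w : ℚ) + 1) / ((ν : ℚ) + 1) * (derivative^[w] (feldman ν)).eval (-1) := by
  rw [feldman_succ, iterate_derivative_smul, iterate_derivative_mul_X, iterate_derivative_taylor,
    iterate_derivative_taylor, add_tsub_cancel_right, eval_smul, eval_add, eval_mul_X, mul_zero,
    zero_add, eval_smul, taylor_eval, zero_add, smul_eq_mul, nsmul_eq_mul]
  push_cast
  ring

theorem dlcm_succ_pow_succ_mul_iterate_derivative_feldman_succ_eval_zero_mem {ν k w : ℕ}
    (h : (dlcm ν : ℚ) ^ k * (derivative^[w] (feldman ν)).eval (-1) ∈ (⊥ : Subring ℚ)) :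
    (dlcm (ν + 1) : ℚ) ^ (k + 1) * (derivative^[w + 1] (feldman (ν + 1))).eval 0 ∈
      (⊥ : Subring ℚ) := by
  obtain ⟨a, ha⟩ := dvd_dlcm (Nat.le_add_left 1 ν) le_rfl
  have hsplit : (dlcm (ν + 1) : ℚ) ^ (k + 1) * (derivative^[w + 1] (feldman (ν + 1))).eval 0 =
      (a * (w + 1) : ℕ) * ((dlcm (ν + 1) : ℚ) ^ k * (derivative^[w] (feldman ν)).eval (-1)) := by
    rw [iterate_derivative_feldman_succ_eval_zero, pow_succ]
    nth_rw 2 [ha]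
    push_cast
    field_simp
  rw [hsplit]
  exact mul_mem (natCast_mem _ _) (natCast_pow_mul_mem_of_dvd (dlcm_dvd_dlcm_succ ν) h)

theorem dlcm_pow_mul_iterate_derivative_feldman_eval_mem (ν : ℕ) {k u : ℕ} (hu : u ≤ k)
    (ℓ : ℤ) :
    (dlcm ν : ℚ) ^ k * (derivative^[u] (feldman ν)).eval (ℓ : ℚ) ∈ (⊥ : Subring ℚ) := by
  induction ν generalizing k u ℓ with
  | zero =>
    rcases u with _ | u
    · simp [feldman_zero, dlcm]
    · simp [feldman_zero, iterate_derivative_one]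
  | succ ν ih =>
    refine AddSubgroupClass.mem_of_sub_mem_of_mem_zero (f := fun ℓ : ℤ =>
      (dlcm (ν + 1) : ℚ) ^ k * (derivative^[u] (feldman (ν + 1))).eval (ℓ : ℚ)) ?_ (fun n => ?_) ℓ
    · rcases u with _ | w
      · simp [feldman_succ]
      obtain ⟨m, rfl⟩ : ∃ m, k = m + 1 := ⟨k - 1, by omega⟩
      simpa using dlcm_succ_pow_succ_mul_iterate_derivative_feldman_succ_eval_zero_mem
        (ih (Nat.le_of_succ_le_succ hu) (-1))
    · simp only [Int.cast_add, Int.cast_one, iterate_derivative_feldman_succ_eval_add_one, mul_add,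
        add_sub_cancel_left]
      exact natCast_pow_mul_mem_of_dvd (dlcm_dvd_dlcm_succ ν) (ih hu n)

theorem stmt5 (k ν : ℕ) (ℓ : ℤ) (u : ℕ) (hu : u ≤ k) :
    ∃ z : ℤ, ((dlcm ν : ℚ)) ^ k * (derivative^[u] (feldman ν)).eval (ℓ : ℚ) = (z : ℚ) := by
  obtain ⟨z, hz⟩ := Subring.mem_bot.1 (dlcm_pow_mul_iterate_derivative_feldman_eval_mem ν hu ℓ)
  exact ⟨z, hz.symm⟩
end

section
/- Let m ≥ 1 be an integer, x₀, …, x_m pairwise distinct complex numbers, and n₀, …, n_m positive integers; set σ = n₀ + ⋯ + n_m. Let C₀ be the circle centered at 0 whose radius is strictly smaller than the minimal distance between two of the x_j, and C_∞ a circle centered at 0 containing all the points x₀, …, x_m in its interior. For 0 ≤ ℓ ≤ m define P_ℓ(z) = (1/2πi) ∮_{C₀} e^{zζ}/∏_{j=0}^{m} (ζ + x_ℓ − x_j)^{n_j} dζ and R(z) = (1/2πi) ∮_{C_∞} e^{zζ}/∏_{j=0}^{m} (ζ − x_j)^{n_j} dζ. Then: (1) each P_ℓ is a polynomial of degree exactly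 n_ℓ − 1; (2) R(z) = Σ_{ℓ=0}^{m} P_ℓ(z)·e^{x_ℓ z} for all z ∈ ℂ; (3) R vanishes at 0 to order at least σ − 1. -/
/-!
Partial fractions give `1 / ∏ⱼ (ζ - xⱼ)^{nⱼ} = ∑_ℓ ∑_{k < n_ℓ} c_{ℓk} / (ζ - x_ℓ)^{k+1}` with
`c_{ℓ,n_ℓ-1} ≠ 0`. By Cauchy's formula for derivatives, `∮ f(ζ) / (ζ - a)^{k+1} dζ` equals
`2πi f⁽ᵏ⁾(a) / k!` when `a` is inside the circle and `0` when it is outside; for `f = e^{z·}`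
this is `2πi z^k e^{za} / k!`. Only the pole `0` of the shifted integrand of `P_ℓ` lies inside
`C₀`, so `P_ℓ(z) = ∑_k c_{ℓk} z^k / k!`, while all poles lie inside `C_∞`, so
`R = ∑_ℓ P_ℓ e^{x_ℓ z}`. Finally `R⁽ᵗ⁾(0) = (2πi)⁻¹ ∮ ζ^t / ∏ⱼ (ζ - xⱼ)^{nⱼ} dζ` by
differentiating under the integral sign, and for `t + 2 ≤ σ` this integrand is `O(|ζ|⁻²)`, so
pushing the circle to infinity shows that the integral vanishes.
-/

open Complex Metric Finset Polynomial
open scoped Real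

/-- The Hermite integral
`P_ℓ(z) = (1/2πi) ∮_{C₀} e^{zζ} / ∏ⱼ (ζ + x_ℓ − x_j)^{n_j} dζ`
over the positively oriented circle `C₀` centered at `0` of radius `r₀`. -/
noncomputable def hermitePade (m : ℕ) (x : Fin (m + 1) → ℂ) (n : Fin (m + 1) → ℕ)
    (r₀ : ℝ) (ℓ : Fin (m + 1)) (z : ℂ) : ℂ :=
  (2 * Real.pi * Complex.I)⁻¹ *
    ∮ ζ in C(0, r₀), Complex.exp (z * ζ) / ∏ j, (ζ + x ℓ - x j) ^ (n j)

/-- The remainder integral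
`R(z) = (1/2πi) ∮_{C_∞} e^{zζ} / ∏ⱼ (ζ − x_j)^{n_j} dζ`
over the positively oriented circle `C_∞` centered at `0` of radius `Rinf`. -/
noncomputable def hermiteRem (m : ℕ) (x : Fin (m + 1) → ℂ) (n : Fin (m + 1) → ℕ)
    (Rinf : ℝ) (z : ℂ) : ℂ :=
  (2 * Real.pi * Complex.I)⁻¹ *
    ∮ ζ in C(0, Rinf), Complex.exp (z * ζ) / ∏ j, (ζ - x j) ^ (n j)

section PartialFractions

variable {K ι : Type*} [Field K]

theorem eval_div_sub_pow_eq_sum_taylor_coeff {p : K[X]} {a ζ : K} {n : ℕ}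
    (hp : p.natDegree < n) (hζ : ζ ≠ a) :
    p.eval ζ / (ζ - a) ^ n =
      ∑ k ∈ range n, (taylor a p).coeff (n - 1 - k) / (ζ - a) ^ (k + 1) := by
  have hζa : ζ - a ≠ 0 := sub_ne_zero.2 hζ
  rw [← taylor_eval_sub a, eval_eq_sum_range' (by rwa [natDegree_taylor]), sum_div,
    ← sum_range_reflect]
  refine sum_congr rfl fun k hk => ?_
  have hkn := mem_range.1 hk
  rw [div_eq_div_iff (pow_ne_zero _ hζa) (pow_ne_zero _ hζa), mul_assoc, ← pow_add]
  congr 2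
  omega

variable [Fintype ι] {x : ι → K} {n : ι → ℕ}

def IsPartialFraction (x : ι → K) (n : ι → ℕ) (c : ι → ℕ → K) : Prop :=
  ∀ ζ, (∀ j, ζ ≠ x j) →
    (∏ j, (ζ - x j) ^ n j)⁻¹ = ∑ i, ∑ k ∈ range (n i), c i k / (ζ - x i) ^ (k + 1)

theorem IsPartialFraction.sub_const {c : ι → ℕ → K} (h : IsPartialFraction x n c) (b : K) :
    IsPartialFraction (fun j => x j - b) n c := fun ζ hζ => by
  simpa only [sub_sub_eq_add_sub, add_sub_cancel_right] using
    h (ζ + b) fun j hj => hζ j (eq_sub_of_add_eq hj)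

variable [Nonempty ι]

theorem exists_sum_mul_prod_erase_sub_pow_eq_one [DecidableEq ι] (hx : Function.Injective x)
    (hn : ∀ i, 0 < n i) :
    ∃ r : ι → K[X], (∀ i, (r i).natDegree < n i) ∧
      ∑ i, r i * ∏ j ∈ univ.erase i, (X - C (x j)) ^ n j = 1 := by
  set g : ι → K[X] := fun j => (X - C (x j)) ^ n j
  have hg : ∀ j, (g j).Monic := fun j => (monic_X_sub_C _).pow _
  have hdeg : ∀ j, (g j).degree = n j := fun j => by simp [g]
  obtain ⟨q, r, hr, h⟩ := eq_quo_mul_prod_add_sum_rem_mul_prod (s := univ) (1 : K[X])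
    (fun j _ => hg j)
    (fun i _ j _ hij => (isCoprime_X_sub_C_of_isUnit_sub (sub_ne_zero.2 (hx.ne hij)).isUnit).pow)
  have hr' : ∀ i, (r i).degree < (g i).degree := fun i => hr i (mem_univ i)
  refine ⟨r, fun i => ?_, ?_⟩
  · rcases eq_or_ne (r i) 0 with h0 | h0
    · simpa [h0] using hn i
    · exact (natDegree_lt_iff_degree_lt h0).2 (hdeg i ▸ hr' i)
  -- the quotient `q` vanishes, because every other term of `h` has degree below `∏ g`
  have hsum : (∑ i, r i * ∏ j ∈ univ.erase i, g j).degree < (∏ j, g j).degree := by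
    refine (degree_sum_le _ _).trans_lt ((Finset.sup_lt_iff (WithBot.bot_lt_iff_ne_bot.2 ?_)).2
      fun i _ => ?_)
    · exact (monic_prod_of_monic _ _ fun j _ => hg j).ne_zero ∘ degree_eq_bot.1
    have hM : (∏ j ∈ univ.erase i, g j).Monic := monic_prod_of_monic _ _ fun j _ => hg j
    rw [← mul_prod_erase univ g (mem_univ i), hM.degree_mul, hM.degree_mul]
    exact WithBot.add_lt_add_right (by simp [hM.ne_zero]) (hr' i)
  have hone : (1 : K[X]).degree < (∏ j, g j).degree := by
    rw [degree_one, degree_prod]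
    simp only [hdeg]
    exact_mod_cast sum_pos (fun i _ => hn i) univ_nonempty
  have hq : q * ∏ j, g j = 0 :=
    eq_zero_of_dvd_of_degree_lt (dvd_mul_left _ q) (by
      rw [eq_sub_of_add_eq h.symm]
      exact (degree_sub_le _ _).trans_lt (max_lt hone hsum))
  simpa [hq] using h.symm

theorem exists_isPartialFraction (hx : Function.Injective x) (hn : ∀ i, 0 < n i) :
    ∃ c, IsPartialFraction x n c ∧ ∀ i, c i (n i - 1) ≠ 0 := by
  classical
  obtain ⟨r, hr, h⟩ := exists_sum_mul_prod_erase_sub_pow_eq_one hx hn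
  refine ⟨fun i k => (taylor (x i) (r i)).coeff (n i - 1 - k), fun ζ hζ => ?_, fun i => ?_⟩
  · have hζ' : ∀ j, (ζ - x j) ^ n j ≠ 0 := fun j => pow_ne_zero _ (sub_ne_zero.2 (hζ j))
    have h1 := congrArg (eval ζ) h
    simp only [eval_finsetSum, eval_mul, eval_prod, eval_pow, eval_sub, eval_X, eval_C,
      eval_one] at h1
    rw [← one_mul (∏ j, (ζ - x j) ^ n j)⁻¹, ← h1, sum_mul]
    refine sum_congr rfl fun i _ => ?_
    have hE : ∏ j ∈ univ.erase i, (ζ - x j) ^ n j ≠ 0 := prod_ne_zero_iff.2 fun j _ => hζ' j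
    rw [← eval_div_sub_pow_eq_sum_taylor_coeff (hr i) (hζ i),
      ← mul_prod_erase univ (fun j => (ζ - x j) ^ n j) (mem_univ i)]
    field_simp [hζ' i]
  · have h1 := congrArg (eval (x i)) h
    simp only [eval_finsetSum, eval_mul, eval_prod, eval_pow, eval_sub, eval_X, eval_C,
      eval_one] at h1
    rw [sum_eq_single i (fun l _ hl => ?_) (by simp)] at h1
    · simpa [taylor_coeff_zero] using left_ne_zero_of_mul_eq_one h1
    · exact mul_eq_zero_of_right _ (prod_eq_zero (mem_erase.2 ⟨hl.symm, mem_univ i⟩)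
        (by simp [(hn i).ne']))

end PartialFractions

section CauchyFormula

variable {f : ℂ → ℂ} {c a : ℂ} {R : ℝ}

theorem circleIntegrable_div_sub_pow {g : ℂ → ℂ} (hg : Continuous g) (hR : 0 ≤ R)
    (ha : a ∉ sphere c R) (p : ℕ) : CircleIntegrable (fun ζ => g ζ / (ζ - a) ^ p) c R :=
  ContinuousOn.circleIntegrable hR <| hg.continuousOn.div (by fun_prop)
    fun ζ hζ => pow_ne_zero _ (sub_ne_zero.2 (ne_of_mem_of_not_mem hζ ha))

theorem circleIntegral_deriv_div_sub_pow (hf : Differentiable ℂ f) (hR : 0 ≤ R)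
    (ha : a ∉ sphere c R) (k : ℕ) :
    ∮ ζ in C(c, R), deriv f ζ / (ζ - a) ^ (k + 1) =
      (k + 1) * ∮ ζ in C(c, R), f ζ / (ζ - a) ^ (k + 2) := by
  have hderiv : ∀ ζ ∈ sphere c R, HasDerivAt (fun ζ => f ζ / (ζ - a) ^ (k + 1))
      (deriv f ζ / (ζ - a) ^ (k + 1) - (k + 1) * f ζ / (ζ - a) ^ (k + 2)) ζ := by
    intro ζ hζ
    have hζa : ζ - a ≠ 0 := sub_ne_zero.2 (ne_of_mem_of_not_mem hζ ha)
    refine ((hf ζ).hasDerivAt.fun_div (((hasDerivAt_id' ζ).sub_const a).fun_pow (k + 1))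
      (pow_ne_zero _ hζa)).congr_deriv ?_
    field_simp
    push_cast
    ring
  have h := circleIntegral.integral_eq_zero_of_hasDerivWithinAt hR
    fun ζ hζ => (hderiv ζ hζ).hasDerivWithinAt
  rw [circleIntegral.integral_sub (circleIntegrable_div_sub_pow hf.deriv.continuous hR ha _)
    (circleIntegrable_div_sub_pow (hf.continuous.const_mul _) hR ha _), sub_eq_zero] at h
  simp_rw [mul_div_assoc, circleIntegral.integral_const_mul] at h
  exact h

theorem circleIntegral_div_sub_pow_of_mem_ball (hf : Differentiable ℂ f) (ha : a ∈ ball c R)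
    (k : ℕ) :
    ∮ ζ in C(c, R), f ζ / (ζ - a) ^ (k + 1) = 2 * π * I * iteratedDeriv k f a / k.factorial := by
  induction k generalizing f with
  | zero =>
    simpa [div_eq_inv_mul] using hf.differentiableOn.circleIntegral_sub_inv_smul ha
  | succ k ih =>
    have hR : 0 ≤ R := dist_nonneg.trans (mem_ball.1 ha).le
    have h := circleIntegral_deriv_div_sub_pow hf hR
      (fun h => (mem_ball.1 ha).ne (mem_sphere.1 h)) k
    rw [ih hf.deriv, ← iteratedDeriv_succ'] at h
    have hk : (k + 1 : ℂ) ≠ 0 := Nat.cast_add_one_ne_zero k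
    rw [← mul_right_inj' hk, ← h, Nat.factorial_succ, Nat.cast_mul]
    field_simp
    push_cast
    ring

theorem circleIntegral_div_sub_pow_of_notMem_closedBall (hf : Differentiable ℂ f) (hR : 0 ≤ R)
    (ha : a ∉ closedBall c R) (k : ℕ) :
    ∮ ζ in C(c, R), f ζ / (ζ - a) ^ k = 0 := by
  refine (DifferentiableOn.diffContOnCl ?_).circleIntegral_eq_zero hR
  exact (hf.differentiableOn.div (by fun_prop) fun ζ hζ =>
    pow_ne_zero _ (sub_ne_zero.2 (ne_of_mem_of_not_mem (closure_ball_subset_closedBall hζ) ha)))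

theorem IsPartialFraction.circleIntegral_div_prod_sub_pow {ι : Type*} [Fintype ι] {x : ι → ℂ}
    {n : ι → ℕ} {coef : ι → ℕ → ℂ} (hpf : IsPartialFraction x n coef) (hf : Differentiable ℂ f)
    (hR : 0 ≤ R) (s : Finset ι) (hs : ∀ i ∈ s, x i ∈ ball c R)
    (hsc : ∀ i ∉ s, x i ∉ closedBall c R) :
    ∮ ζ in C(c, R), f ζ / ∏ j, (ζ - x j) ^ n j =
      2 * π * I * ∑ i ∈ s, ∑ k ∈ range (n i), coef i k * iteratedDeriv k f (x i) / k.factorial := by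
  have hx : ∀ i, x i ∉ sphere c R := fun i hi => by
    by_cases h : i ∈ s
    · exact (mem_ball.1 (hs i h)).ne (mem_sphere.1 hi)
    · exact hsc i h (sphere_subset_closedBall hi)
  have hint : ∀ i k, CircleIntegrable (fun ζ => coef i k * (f ζ / (ζ - x i) ^ (k + 1))) c R :=
    fun i k => by
      simpa only [mul_div_assoc] using
        circleIntegrable_div_sub_pow (hf.continuous.const_mul (coef i k)) hR (hx i) (k + 1)
  calc ∮ ζ in C(c, R), f ζ / ∏ j, (ζ - x j) ^ n j
      = ∮ ζ in C(c, R), ∑ i, ∑ k ∈ range (n i), coef i k * (f ζ / (ζ - x i) ^ (k + 1)) := by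
        refine circleIntegral.integral_congr hR fun ζ hζ => ?_
        rw [div_eq_mul_inv, hpf ζ fun j h => hx j (h ▸ hζ), mul_sum]
        exact sum_congr rfl fun i _ => by rw [mul_sum]; exact sum_congr rfl fun k _ => by ring
    _ = ∑ i, ∑ k ∈ range (n i), coef i k * ∮ ζ in C(c, R), f ζ / (ζ - x i) ^ (k + 1) := by
        rw [circleIntegral.integral_fun_sum fun i _ =>
          CircleIntegrable.fun_sum _ fun k _ => hint i k]
        refine sum_congr rfl fun i _ => ?_
        rw [circleIntegral.integral_fun_sum fun k _ => hint i k]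
        exact sum_congr rfl fun k _ => circleIntegral.integral_const_mul _ _ _ _
    _ = ∑ i ∈ s, ∑ k ∈ range (n i), coef i k * ∮ ζ in C(c, R), f ζ / (ζ - x i) ^ (k + 1) :=
        (sum_subset (subset_univ s) fun i _ hi => sum_eq_zero fun k _ => by
          rw [circleIntegral_div_sub_pow_of_notMem_closedBall hf hR (hsc i hi), mul_zero]).symm
    _ = _ := by
        rw [mul_sum]
        refine sum_congr rfl fun i hi => ?_
        rw [mul_sum]
        refine sum_congr rfl fun k _ => ?_
        rw [circleIntegral_div_sub_pow_of_mem_ball hf (hs i hi)]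
        ring

end CauchyFormula

section Decay

open Filter Topology Bornology

theorem circleIntegral_eq_zero_of_tendsto_cobounded {E : Type*} [NormedAddCommGroup E]
    [NormedSpace ℂ E] [CompleteSpace E] {f : ℂ → E} {c : ℂ} {R : ℝ} (hR : 0 < R)
    (hf : DifferentiableOn ℂ f (ball c R)ᶜ)
    (hlim : Tendsto (fun z => (z - c) • f z) (cobounded ℂ) (𝓝 0)) :
    ∮ z in C(c, R), f z = 0 := by
  have hconst : ∀ R' ≥ R, ∮ z in C(c, R'), f z = ∮ z in C(c, R), f z := fun R' hR' =>
    circleIntegral_eq_of_differentiable_on_annulus_off_countable hR hR' Set.countable_empty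
      (hf.continuousOn.mono fun z hz => hz.2) fun z hz => hf.differentiableAt <|
        mem_of_superset (isClosed_closedBall.isOpen_compl.mem_nhds hz.1.2)
          (Set.compl_subset_compl.2 ball_subset_closedBall)
  refine norm_le_zero_iff.1 (le_of_forall_pos_le_add fun ε hε => ?_)
  obtain ⟨r, -, hr⟩ := (hasBasis_cobounded_compl_closedBall c).tendsto_left_iff.1 hlim
    (closedBall 0 (ε / (2 * π))) (closedBall_mem_nhds _ (by positivity))
  set R' := max R (r + 1)
  have hR' : 0 < R' := hR.trans_le (le_max_left _ _)
  have hbound : ∀ z ∈ sphere c R', ‖f z‖ ≤ ε / (2 * π) / R' := fun z hz => by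
    have hz' : z ∉ closedBall c r := fun h => (mem_closedBall.1 h).not_gt
      ((mem_sphere.1 hz).symm ▸ (lt_add_one r).trans_le (le_max_right _ _))
    have := mem_closedBall_zero_iff.1 (hr hz')
    rwa [norm_smul, ← dist_eq_norm, mem_sphere.1 hz, mul_comm, ← le_div_iff₀ hR'] at this
  rw [← hconst R' (le_max_left _ _)]
  calc ‖∮ z in C(c, R'), f z‖ ≤ 2 * π * R' * (ε / (2 * π) / R') :=
        circleIntegral.norm_integral_le_of_norm_le_const hR'.le hbound
    _ = 0 + ε := by field_simp; ring

theorem circleIntegral_eval_div_eval_eq_zero {P Q : ℂ[X]} (hPQ : P.degree + 1 < Q.degree)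
    {c : ℂ} {R : ℝ} (hR : 0 < R) (hQ : ∀ z, Q.IsRoot z → z ∈ ball c R) :
    ∮ z in C(c, R), P.eval z / Q.eval z = 0 := by
  refine circleIntegral_eq_zero_of_tendsto_cobounded hR
    (P.differentiableOn.div Q.differentiableOn fun z hz h => hz (hQ z h)) ?_
  have hdeg : ((X - C c) * P).degree < Q.degree := by
    rwa [degree_mul, degree_X_sub_C, add_comm]
  simpa [mul_div_assoc] using (isLittleO_cobounded_of_degree_lt hdeg).tendsto_div_nhds_zero

end Decay

theorem hasDerivAt_circleIntegral_exp_mul {g : ℂ → ℂ} {c : ℂ} {R : ℝ} (hR : 0 ≤ R)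
    (hg : ContinuousOn g (sphere c R)) (z : ℂ) :
    HasDerivAt (fun w => ∮ ζ in C(c, R), cexp (w * ζ) * g ζ)
      (∮ ζ in C(c, R), cexp (z * ζ) * (ζ * g ζ)) z := by
  have hγ : Continuous (circleMap c R) := continuous_circleMap c R
  have hG : Continuous fun θ => g (circleMap c R θ) :=
    hg.comp_continuous hγ (circleMap_mem_sphere c hR)
  have hγ' : Continuous (deriv (circleMap c R)) := by
    rw [funext (deriv_circleMap c R)]
    exact (continuous_circleMap 0 R).mul continuous_const
  simp only [circleIntegral, smul_eq_mul]
  generalize deriv (circleMap c R) = γ' at hγ' ⊢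
  generalize circleMap c R = γ at hγ hG ⊢
  set F' : ℂ → ℝ → ℂ := fun w θ => γ' θ * (cexp (w * γ θ) * (γ θ * g (γ θ)))
  have hF' : Continuous fun p : ℂ × ℝ => F' p.1 p.2 :=
    (hγ'.comp continuous_snd).mul (((continuous_fst.mul (hγ.comp continuous_snd)).cexp).mul
      ((hγ.comp continuous_snd).mul (hG.comp continuous_snd)))
  have hF : ∀ w, Continuous fun θ => γ' θ * (cexp (w * γ θ) * g (γ θ)) := fun w =>
    hγ'.mul (((continuous_const.mul hγ).cexp).mul hG)
  obtain ⟨C, hC⟩ := (isCompact_closedBall z 1 |>.prod isCompact_Icc).exists_bound_of_continuousOn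
    (f := fun p : ℂ × ℝ => F' p.1 p.2) (s := closedBall z 1 ×ˢ Set.Icc 0 (2 * π)) hF'.continuousOn
  refine (intervalIntegral.hasDerivAt_integral_of_dominated_loc_of_deriv_le (F' := F')
    (bound := fun _ => C) (ball_mem_nhds z one_pos)
    (Filter.Eventually.of_forall fun w => (hF w).aestronglyMeasurable)
    ((hF z).intervalIntegrable _ _)
    (hF'.comp (Continuous.prodMk_right z)).aestronglyMeasurable ?_ intervalIntegrable_const ?_).2
  · refine Filter.Eventually.of_forall fun θ hθ w hw => hC (w, θ) ⟨ball_subset_closedBall hw,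
      Set.Ioc_subset_Icc_self (by rwa [Set.uIoc_of_le Real.two_pi_pos.le] at hθ)⟩
  · refine Filter.Eventually.of_forall fun θ _ w _ => ?_
    exact ((((hasDerivAt_id' w).mul_const (γ θ)).cexp.mul_const (g (γ θ))).const_mul
      (γ' θ)).congr_deriv (by simp only [F']; ring)

theorem iteratedDeriv_circleIntegral_exp_mul {g : ℂ → ℂ} {c : ℂ} {R : ℝ} (hR : 0 ≤ R)
    (hg : ContinuousOn g (sphere c R)) (t : ℕ) :
    iteratedDeriv t (fun w => ∮ ζ in C(c, R), cexp (w * ζ) * g ζ) =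
      fun w => ∮ ζ in C(c, R), cexp (w * ζ) * (ζ ^ t * g ζ) := by
  induction t with
  | zero => simp
  | succ t ih =>
    rw [iteratedDeriv_succ, ih]
    funext w
    rw [(hasDerivAt_circleIntegral_exp_mul (g := fun ζ => ζ ^ t * g ζ) hR
      ((continuousOn_pow t).mul hg) w).deriv]
    simp only [← mul_assoc, ← pow_succ']

theorem Polynomial.degree_sum_range_C_mul_X_pow {R : Type*} [Semiring R] {b : ℕ → R} {d : ℕ}
    (hb : b d ≠ 0) : (∑ k ∈ range (d + 1), C (b k) * X ^ k).degree = (d : WithBot ℕ) := by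
  have hlt : (∑ k ∈ range d, C (b k) * X ^ k).degree < (d : WithBot ℕ) := by
    simpa only [Fin.sum_univ_eq_sum_range (fun k => C (b k) * X ^ k)] using
      degree_sum_fin_lt fun k : Fin d => b k
  rw [sum_range_succ, degree_add_eq_right_of_degree_lt, degree_C_mul_X_pow d hb]
  rwa [degree_C_mul_X_pow d hb]

section Hermite

variable {m : ℕ} {x : Fin (m + 1) → ℂ} {n : Fin (m + 1) → ℕ} {coef : Fin (m + 1) → ℕ → ℂ}

theorem hermitePade_eq_sum (hpf : IsPartialFraction x n coef) {r₀ : ℝ} (hr₀ : 0 < r₀)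
    (hr₀' : ∀ i j, i ≠ j → r₀ < dist (x i) (x j)) (ℓ : Fin (m + 1)) (z : ℂ) :
    hermitePade m x n r₀ ℓ z = ∑ k ∈ range (n ℓ), coef ℓ k * z ^ k / k.factorial := by
  have h := (hpf.sub_const (x ℓ)).circleIntegral_div_prod_sub_pow (c := 0)
    (f := fun ζ => cexp (z * ζ)) (by fun_prop) hr₀.le {ℓ} (by simpa using hr₀)
    fun i hi => by
      simpa [dist_eq_norm] using hr₀' i ℓ (by simpa using hi)
  simp only [sub_sub_eq_add_sub, sum_singleton, sub_self, iteratedDeriv_cexp_const_mul, mul_zero,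
    exp_zero, mul_one] at h
  rw [hermitePade, h, ← mul_assoc, inv_mul_cancel₀ two_pi_I_ne_zero, one_mul]

theorem hermiteRem_eq_sum (hpf : IsPartialFraction x n coef) {Rinf : ℝ}
    (hRinf : ∀ j, ‖x j‖ < Rinf) (z : ℂ) :
    hermiteRem m x n Rinf z =
      ∑ ℓ, (∑ k ∈ range (n ℓ), coef ℓ k * z ^ k / k.factorial) * cexp (x ℓ * z) := by
  have h := hpf.circleIntegral_div_prod_sub_pow (c := 0)
    (f := fun ζ => cexp (z * ζ)) (by fun_prop)
    ((norm_nonneg _).trans (hRinf 0).le) univ (fun i _ => by simpa using hRinf i) (by simp)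
  simp only [iteratedDeriv_cexp_const_mul] at h
  rw [hermiteRem, h, ← mul_assoc, inv_mul_cancel₀ two_pi_I_ne_zero, one_mul]
  refine sum_congr rfl fun ℓ _ => ?_
  rw [sum_mul]
  refine sum_congr rfl fun k _ => ?_
  rw [mul_comm (x ℓ) z]
  ring

theorem iteratedDeriv_hermiteRem_eq_zero {Rinf : ℝ} (hRinf : ∀ j, ‖x j‖ < Rinf) {t : ℕ}
    (ht : t + 1 < ∑ j, n j) : iteratedDeriv t (hermiteRem m x n Rinf) 0 = 0 := by
  have hR : 0 < Rinf := (norm_nonneg _).trans_lt (hRinf 0)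
  set Q : ℂ[X] := ∏ j, (X - C (x j)) ^ n j
  have hQ : ∀ ζ, Q.eval ζ = ∏ j, (ζ - x j) ^ n j := fun ζ => by simp [Q, eval_prod]
  have hroot : ∀ ζ, Q.IsRoot ζ → ζ ∈ ball 0 Rinf := fun ζ h => by
    rw [IsRoot.def, hQ, prod_eq_zero_iff] at h
    obtain ⟨j, -, hj⟩ := h
    simpa [sub_eq_zero.1 (eq_zero_of_pow_eq_zero hj)] using hRinf j
  have hcont : ContinuousOn (fun ζ => (Q.eval ζ)⁻¹) (sphere 0 Rinf) :=
    Q.continuous.continuousOn.inv₀ fun ζ hζ h =>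
      (mem_ball.1 (hroot ζ h)).ne (mem_sphere.1 hζ)
  have hrem : hermiteRem m x n Rinf =
      fun w => (2 * π * I)⁻¹ * ∮ ζ in C(0, Rinf), cexp (w * ζ) * (Q.eval ζ)⁻¹ := by
    funext w
    simp only [hermiteRem, hQ, div_eq_mul_inv]
  have hdeg : (X ^ t : ℂ[X]).degree + 1 < Q.degree := by
    rw [degree_X_pow]
    simp only [Q, degree_prod, degree_pow, degree_X_sub_C, nsmul_one]
    exact_mod_cast ht
  have h := circleIntegral_eval_div_eval_eq_zero hdeg hR hroot
  rw [hrem, iteratedDeriv_const_mul_field, iteratedDeriv_circleIntegral_exp_mul hR.le hcont]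
  simpa [div_eq_mul_inv] using h

end Hermite

theorem stmt6_general (m : ℕ) (x : Fin (m + 1) → ℂ) (hx : Function.Injective x)
    (n : Fin (m + 1) → ℕ) (hn : ∀ j, 1 ≤ n j) (σ : ℕ) (hσ : σ = ∑ j, n j)
    (r₀ : ℝ) (hr₀ : 0 < r₀) (hr₀' : ∀ i j, i ≠ j → r₀ < dist (x i) (x j))
    (Rinf : ℝ) (hRinf : ∀ j, ‖x j‖ < Rinf) :
    (∀ ℓ, ∃ p : Polynomial ℂ, p.degree = ((n ℓ - 1 : ℕ) : WithBot ℕ) ∧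
        ∀ z, hermitePade m x n r₀ ℓ z = p.eval z) ∧
    (∀ z, hermiteRem m x n Rinf z = ∑ ℓ, hermitePade m x n r₀ ℓ z * Complex.exp (x ℓ * z)) ∧
    (∀ t, t < σ - 1 → iteratedDeriv t (hermiteRem m x n Rinf) 0 = 0) := by
  obtain ⟨coef, hpf, hcoef⟩ := exists_isPartialFraction hx hn
  refine ⟨fun ℓ => ⟨∑ k ∈ range (n ℓ), C (coef ℓ k / k.factorial) * X ^ k, ?_, fun z => ?_⟩,
    fun z => ?_, fun t ht => iteratedDeriv_hermiteRem_eq_zero hRinf (by omega)⟩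
  · obtain ⟨d, hd⟩ := Nat.exists_eq_add_of_le' (hn ℓ)
    have hc := hcoef ℓ
    rw [hd, Nat.add_sub_cancel] at hc ⊢
    exact degree_sum_range_C_mul_X_pow (div_ne_zero hc (Nat.cast_ne_zero.2 d.factorial_ne_zero))
  · simp [hermitePade_eq_sum hpf hr₀ hr₀' ℓ z, eval_finsetSum, div_mul_eq_mul_div]
  · simp only [hermiteRem_eq_sum hpf hRinf, hermitePade_eq_sum hpf hr₀ hr₀']

theorem stmt6 (m : ℕ) (hm : 1 ≤ m) (x : Fin (m + 1) → ℂ) (hx : Function.Injective x)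
    (n : Fin (m + 1) → ℕ) (hn : ∀ j, 1 ≤ n j) (σ : ℕ) (hσ : σ = ∑ j, n j)
    (r₀ : ℝ) (hr₀ : 0 < r₀) (hr₀' : ∀ i j, i ≠ j → r₀ < dist (x i) (x j))
    (Rinf : ℝ) (hRinf : ∀ j, ‖x j‖ < Rinf) :
    (∀ ℓ, ∃ p : Polynomial ℂ, p.degree = ((n ℓ - 1 : ℕ) : WithBot ℕ) ∧
        ∀ z, hermitePade m x n r₀ ℓ z = p.eval z) ∧
    (∀ z, hermiteRem m x n Rinf z = ∑ ℓ, hermitePade m x n r₀ ℓ z * Complex.exp (x ℓ * z)) ∧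
    (∀ t, t < σ - 1 → iteratedDeriv t (hermiteRem m x n Rinf) 0 = 0) :=
  stmt6_general m x hx n hn σ hσ r₀ hr₀ hr₀' Rinf hRinf
end

section
/- For every natural number n and every integer k with 0 ≤ k ≤ n, one has C(n,k) < 2^n·√(2/(π(n+1/2))) and C(n,k) ≤ 2^n·√(1/(n+1)). Moreover, for every integer n ≥ 1 and every 0 ≤ k ≤ n, C(n,k) ≤ 2^n·√(3/(4(n+1))). -/
/-!
The sequence `a m = C(2m,m)² (m + 1/4) / 16^m` is strictly increasing, because
`(2m+1)² (4m+5) = 4 (m+1)² (4m+1) + 1`, and by Wallis' product it tends to `1/π`; hence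
`C(2m,m)² π (m + 1/4) < 16^m`. Odd `n = 2m+1` reduces to the even case through
`C(2m+2, m+1) = 2 C(2m+1, m)`, and every `C(n,k)` is at most the middle coefficient. The two weaker
bounds follow from `π > 3` and `π > 3.14`, apart from a few small `n`.
-/

open Real Filter Topology Nat

noncomputable def centralBinomSeq (m : ℕ) : ℝ :=
  (centralBinom m : ℝ) ^ 2 * ((m : ℝ) + 1 / 4) / 16 ^ m

lemma centralBinomSeq_eq_div_W (m : ℕ) :
    centralBinomSeq m = (1 / 4 + m) / (1 + 2 * m) / Real.Wallis.W m := by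
  have hfact : (centralBinom m : ℝ) * m ! * m ! = (2 * m)! := by
    rw [centralBinom_eq_two_mul_choose, two_mul]
    exact_mod_cast add_choose_mul_factorial_mul_factorial m m
  have h16 : (2 : ℝ) ^ (4 * m) = 16 ^ m := by rw [pow_mul]; norm_num
  rw [centralBinomSeq, Real.Wallis.W_eq_factorial_ratio, ← hfact, h16]
  have hB := (centralBinom_pos m).ne'
  have hfact_pos := (factorial_pos m).ne'
  field_simp
  ring

lemma centralBinomSeq_lt_succ (m : ℕ) : centralBinomSeq m < centralBinomSeq (m + 1) := by
  have hrec : (centralBinom (m + 1) : ℝ) = 2 * (2 * m + 1) * centralBinom m / (m + 1) := by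
    rw [eq_div_iff (by positivity)]
    exact_mod_cast (mul_comm _ _).trans (succ_mul_centralBinom_succ m)
  have hB : (0 : ℝ) < centralBinom m := by exact_mod_cast centralBinom_pos m
  have h16 : (0 : ℝ) < 16 ^ m := by positivity
  rw [centralBinomSeq, centralBinomSeq, hrec, pow_succ (16 : ℝ), div_lt_div_iff₀ h16 (by positivity)]
  push_cast
  field_simp
  nlinarith [mul_pos (pow_pos hB 2) h16]

lemma tendsto_centralBinomSeq : Tendsto centralBinomSeq atTop (𝓝 (1 / π)) := by
  have hrat := tendsto_add_mul_div_add_mul_atTop_nhds (1 / 4 : ℝ) 1 1 (two_ne_zero (α := ℝ))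
  have := hrat.div Real.Wallis.tendsto_W_nhds_pi_div_two (by positivity)
  simp only [one_mul] at this
  convert this using 1
  · exact funext centralBinomSeq_eq_div_W
  · field_simp

lemma centralBinomSeq_lt_inv_pi (m : ℕ) : centralBinomSeq m < 1 / π :=
  have hmono : StrictMono centralBinomSeq := strictMono_nat_of_lt_succ centralBinomSeq_lt_succ
  (hmono m.lt_succ_self).trans_le (hmono.monotone.ge_of_tendsto tendsto_centralBinomSeq _)

lemma centralBinom_sq_mul_lt (m : ℕ) :
    (centralBinom m : ℝ) ^ 2 * (π * (m + 1 / 4)) < 16 ^ m := by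
  have := centralBinomSeq_lt_inv_pi m
  rw [centralBinomSeq, div_lt_div_iff₀ (by positivity) pi_pos] at this
  linarith

lemma choose_half_sq_mul_lt (n : ℕ) :
    (n.choose (n / 2) : ℝ) ^ 2 * (π * (n + 1 / 2)) < 2 * 4 ^ n := by
  obtain ⟨m, rfl | rfl⟩ := n.even_or_odd'
  · have h := centralBinom_sq_mul_lt m
    rw [mul_div_cancel_left₀ m two_ne_zero, ← centralBinom_eq_two_mul_choose, pow_mul]
    push_cast
    linarith
  · have hsucc : (centralBinom (m + 1) : ℝ) = 2 * (2 * m + 1).choose m := by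
      rw [centralBinom_eq_two_mul_choose, mul_add_one, choose_succ_succ, choose_symm_half]
      push_cast
      ring
    have h := centralBinom_sq_mul_lt (m + 1)
    rw [hsucc] at h
    have hdiv : (2 * m + 1) / 2 = m := by omega
    have h4 : (4 : ℝ) ^ (2 * m + 1) = 16 ^ m * 4 := by rw [pow_succ, pow_mul]; norm_num
    rw [hdiv, h4]
    rw [pow_succ (16 : ℝ)] at h
    push_cast at h ⊢
    -- the slack `2m + 3/2 ≤ 2 (m + 5/4)` absorbs the passage from `m + 1` back to `2m + 1`
    nlinarith [pi_pos, sq_nonneg ((2 * m + 1).choose m : ℝ)]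

lemma choose_sq_mul_lt (n k : ℕ) :
    (n.choose k : ℝ) ^ 2 * (π * (n + 1 / 2)) < 2 * 4 ^ n := by
  refine lt_of_le_of_lt ?_ (choose_half_sq_mul_lt n)
  gcongr
  exact_mod_cast choose_le_middle k n

lemma choose_lt_two_pow_mul_sqrt (n k : ℕ) :
    (n.choose k : ℝ) < 2 ^ n * √(2 / (π * (n + 1 / 2))) := by
  have hpos : 0 < π * (n + 1 / 2) := by positivity
  rw [← sqrt_sq (by positivity : (0 : ℝ) ≤ 2 ^ n), ← sqrt_mul (by positivity),
    lt_sqrt (by positivity), ← pow_mul, mul_comm n, pow_mul, mul_div_assoc', lt_div_iff₀ hpos]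
  norm_num
  simpa [mul_comm] using choose_sq_mul_lt n k

lemma choose_le_two_pow_mul_sqrt_of_le (n k : ℕ) {t : ℝ} (ht : 2 / (π * (n + 1 / 2)) ≤ t) :
    (n.choose k : ℝ) ≤ 2 ^ n * √t :=
  (choose_lt_two_pow_mul_sqrt n k).le.trans (by gcongr)

lemma choose_le_two_pow_mul_sqrt_inv_succ (n k : ℕ) :
    (n.choose k : ℝ) ≤ 2 ^ n * √(1 / (n + 1)) := by
  obtain rfl | hn := n.eq_zero_or_pos
  · cases k <;> simp
  apply choose_le_two_pow_mul_sqrt_of_le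
  have hn : (1 : ℝ) ≤ n := by exact_mod_cast hn
  rw [div_le_div_iff₀ (by positivity) (by positivity)]
  nlinarith [pi_gt_three]

lemma choose_le_two_pow_mul_sqrt_three_div (n k : ℕ) (hn : 1 ≤ n) :
    (n.choose k : ℝ) ≤ 2 ^ n * √(3 / (4 * (n + 1))) := by
  obtain hn3 | hn3 := lt_or_ge n 3
  · have hhalf : 1 / 2 ≤ √(3 / (4 * (n + 1))) := by
      have : (n : ℝ) ≤ 2 := by exact_mod_cast Nat.le_of_lt_succ hn3
      rw [le_sqrt (by norm_num) (by positivity), le_div_iff₀ (by positivity)]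
      linarith
    calc (n.choose k : ℝ) ≤ n.choose (n / 2) := by exact_mod_cast choose_le_middle k n
      _ ≤ 2 ^ n * (1 / 2) := by interval_cases n <;> norm_num
      _ ≤ 2 ^ n * √(3 / (4 * (n + 1))) := by gcongr
  apply choose_le_two_pow_mul_sqrt_of_le
  have hn : (3 : ℝ) ≤ n := by exact_mod_cast hn3
  rw [div_le_div_iff₀ (by positivity) (by positivity)]
  nlinarith [pi_gt_d2]

theorem stmt9_general (n k : ℕ) :
    ((n.choose k : ℝ) < 2 ^ n * Real.sqrt (2 / (Real.pi * ((n : ℝ) + 1 / 2)))) ∧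
    ((n.choose k : ℝ) ≤ 2 ^ n * Real.sqrt (1 / ((n : ℝ) + 1))) ∧
    (1 ≤ n → (n.choose k : ℝ) ≤ 2 ^ n * Real.sqrt (3 / (4 * ((n : ℝ) + 1)))) :=
  ⟨choose_lt_two_pow_mul_sqrt n k, choose_le_two_pow_mul_sqrt_inv_succ n k,
    choose_le_two_pow_mul_sqrt_three_div n k⟩

theorem stmt9 (n k : ℕ) (hk : k ≤ n) :
    ((n.choose k : ℝ) < 2 ^ n * Real.sqrt (2 / (Real.pi * ((n : ℝ) + 1 / 2)))) ∧
    ((n.choose k : ℝ) ≤ 2 ^ n * Real.sqrt (1 / ((n : ℝ) + 1))) ∧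
    (1 ≤ n → (n.choose k : ℝ) ≤ 2 ^ n * Real.sqrt (3 / (4 * ((n : ℝ) + 1)))) :=
  stmt9_general n k
end

section
/- Let K and L be positive integers, let 0 ≤ k ≤ K−1 and 0 ≤ ℓ ≤ L−1, and let γ = (γ_p)_{0 ≤ p ≤ L−1, p ≠ ℓ} be a tuple of nonnegative integers with Σ_{p≠ℓ} γ_p = K−k−1. Then ∏_{p=0, p≠ℓ}^{L−1} C(γ_p + K−1, K−1) ≤ (e·min(K,L))^{K−1}. -/
/-!
Write `m = K - 1`; the exponents `γ p` sum to at most `m`. Bounding each factor by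
`C(γ p + m, m) ≤ (m + 1) ^ γ p` gives `K ^ m`. Merging the factors by Vandermonde's inequality
`C(a, b) C(c, d) ≤ C(a + c, b + d)` gives `C(m L, m)`, and `C(m L, m) ≤ (m L) ^ m / m! ≤ (e L) ^ m`
since `m ^ m / m! ≤ e ^ m`.
-/

open Finset

namespace Nat

theorem choose_mul_choose_le_add_choose_add (a b c d : ℕ) :
    a.choose b * c.choose d ≤ (a + c).choose (b + d) := by
  rw [add_choose_eq]
  exact single_le_sum (f := fun ij : ℕ × ℕ => a.choose ij.1 * c.choose ij.2)
    (fun _ _ => Nat.zero_le _) (mem_antidiagonal.mpr rfl : (b, d) ∈ antidiagonal (b + d))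

theorem cast_choose_mul_le_exp_mul_pow (r n : ℕ) :
    ((r * n).choose r : ℝ) ≤ (Real.exp 1 * n) ^ r := by
  have hr : (r : ℝ) ^ r / r ! ≤ Real.exp 1 ^ r := by
    simpa [← Real.exp_nat_mul] using Real.pow_div_factorial_le_exp (r : ℝ) (Nat.cast_nonneg r) r
  calc ((r * n).choose r : ℝ) ≤ ((r * n : ℕ) : ℝ) ^ r / r ! := choose_le_pow_div r (r * n)
    _ = (r : ℝ) ^ r / r ! * (n : ℝ) ^ r := by push_cast; ring
    _ ≤ Real.exp 1 ^ r * (n : ℝ) ^ r := by gcongr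
    _ = (Real.exp 1 * n) ^ r := (mul_pow _ _ _).symm

end Nat

section ProdChoose

variable {α : Type*} (s : Finset α) (γ : α → ℕ) (m : ℕ)

theorem prod_choose_add_le_choose_sum_add [DecidableEq α] :
    ∏ p ∈ s, (γ p + m).choose m ≤ (∑ p ∈ s, γ p + m * #s).choose (m * #s) := by
  induction s using Finset.induction with
  | empty => simp
  | @insert a s ha ih =>
    rw [prod_insert ha, sum_insert ha, card_insert_of_notMem ha]
    calc (γ a + m).choose m * ∏ p ∈ s, (γ p + m).choose m
        ≤ (γ a + m).choose m * (∑ p ∈ s, γ p + m * #s).choose (m * #s) := by gcongr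
      _ ≤ (γ a + m + (∑ p ∈ s, γ p + m * #s)).choose (m + m * #s) :=
        Nat.choose_mul_choose_le_add_choose_add _ _ _ _
      _ = (γ a + ∑ p ∈ s, γ p + m * (#s + 1)).choose (m * (#s + 1)) := by ring_nf

variable {s γ m}

theorem prod_choose_add_le_add_one_pow (hsum : ∑ p ∈ s, γ p ≤ m) :
    ∏ p ∈ s, (γ p + m).choose m ≤ (m + 1) ^ m :=
  calc ∏ p ∈ s, (γ p + m).choose m ≤ ∏ p ∈ s, (m + 1) ^ γ p :=
        prod_le_prod' fun p _ => by
          rw [← Nat.choose_symm_add, add_comm]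
          exact Nat.choose_add_le_add_one_pow m (γ p)
    _ = (m + 1) ^ ∑ p ∈ s, γ p := prod_pow_eq_pow_sum _ _ _
    _ ≤ (m + 1) ^ m := Nat.pow_le_pow_right m.succ_pos hsum

theorem prod_choose_add_le_choose_mul [DecidableEq α] (hsum : ∑ p ∈ s, γ p ≤ m) :
    ∏ p ∈ s, (γ p + m).choose m ≤ (m * (#s + 1)).choose m :=
  calc ∏ p ∈ s, (γ p + m).choose m ≤ (∑ p ∈ s, γ p + m * #s).choose (m * #s) :=
        prod_choose_add_le_choose_sum_add s γ m
    _ ≤ (m + m * #s).choose (m * #s) := Nat.choose_le_choose _ (by omega)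
    _ = (m * (#s + 1)).choose m := by rw [← Nat.choose_symm_add]; ring_nf

end ProdChoose

theorem stmt12_general (K L : ℕ) (hK : 1 ≤ K) (hL : 1 ≤ L) (k : ℕ)
    (ℓ : Fin L) (γ : Fin L → ℕ)
    (hγ : ∑ p ∈ Finset.univ.erase ℓ, γ p = K - k - 1) :
    ((∏ p ∈ Finset.univ.erase ℓ, (γ p + (K - 1)).choose (K - 1) : ℕ) : ℝ) ≤
      (Real.exp 1 * (min K L : ℕ)) ^ (K - 1) := by
  have hsum : ∑ p ∈ univ.erase ℓ, γ p ≤ K - 1 := by omega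
  rcases le_total K L with hKL | hLK
  · have hK' : K - 1 + 1 = K := by omega
    have hprod := prod_choose_add_le_add_one_pow hsum
    rw [hK', ← Nat.cast_le (α := ℝ)] at hprod
    refine hprod.trans ?_
    rw [min_eq_left hKL, Nat.cast_pow]
    gcongr
    exact le_mul_of_one_le_left (Nat.cast_nonneg K) (Real.one_le_exp zero_le_one)
  · have hcard : #(univ.erase ℓ) + 1 = L := by
      rw [card_erase_of_mem (mem_univ ℓ), card_univ, Fintype.card_fin]; omega
    have hprod := prod_choose_add_le_choose_mul hsum
    rw [hcard, ← Nat.cast_le (α := ℝ)] at hprod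
    rw [min_eq_right hLK]
    exact hprod.trans (Nat.cast_choose_mul_le_exp_mul_pow _ _)

theorem stmt12 (K L : ℕ) (hK : 1 ≤ K) (hL : 1 ≤ L) (k : ℕ) (hk : k ≤ K - 1)
    (ℓ : Fin L) (γ : Fin L → ℕ)
    (hγ : ∑ p ∈ Finset.univ.erase ℓ, γ p = K - k - 1) :
    ((∏ p ∈ Finset.univ.erase ℓ, (γ p + (K - 1)).choose (K - 1) : ℕ) : ℝ) ≤
      (Real.exp 1 * (min K L : ℕ)) ^ (K - 1) :=
  stmt12_general K L hK hL k ℓ γ hγ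
end

section
/- Let α, β be complex numbers with β ≠ 0 and ε = |exp(β) − α| > 0, let E > 1 be a real number, K ≥ 1 and L ≥ 2 integers, and μ ≥ 0 an integer. Define w_{k,ℓ} = ((α^ℓ − e^{βℓ})/ε)·Σ_{j=0}^{min(μ,k)} C(μ,j)·(k!·ℓ^{μ−j}/(k−j)!)·β^{k−j} and Φ_{k,ℓ}(z) = z^k e^{ℓz}. Set 𝒩 = max{ E·|β|·L , log(L−1) + (L−1)·log(e^{|β|} + ε) } + log((K−1)!) + (μ+1)·log(L+1) + log 2. Then max{ Σ_{k=0}^{K−1} Σ_{ℓ=0}^{L−1} max_{|z| = E} |Φ_{k,ℓ}^{(μ)}(zβ)| , Σ_{k=0}^{K−1} Σ_{ℓ=0}^{L−1} |w_{k,ℓ}| } ≤ e^{𝒩}. -/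
/-!
By the Leibniz rule, `Φ_{k,ℓ}^{(μ)}(z) = e^{ℓz} P(z)` with `P = phiDerivPoly`,
`P(z) = ∑_j C(μ,j) k!/(k-j)! ℓ^{μ-j} z^{k-j}`, and `w_{k,ℓ}` is `(α^ℓ - e^{βℓ})/ε · P(β)`.
Since `k!/(k-j)! · x^{k-j} ≤ k! e^x`, the binomial theorem gives `|P(z)| ≤ k! (ℓ+1)^μ e^{|z|}`.
With `R = e^{|β|} + ε ≥ |α|, |e^β|`, factoring `α^ℓ - (e^β)^ℓ` gives
`|α^ℓ - e^{βℓ}| ≤ ℓ R^{ℓ-1} ε`. Summing, `∑_{k<K} k! ≤ 2 (K-1)!` and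
`∑_{ℓ<L} (ℓ+1)^μ ≤ (L+1)^{μ+1}`.
-/

/-- `Φ_{k,ℓ}(z) = z^k e^{ℓz}`. -/
noncomputable def Phi (k ℓ : ℕ) (z : ℂ) : ℂ := z ^ k * Complex.exp (ℓ * z)

/-- The numbers `w_{k,ℓ} = ((α^ℓ − e^{βℓ})/ε) ∑_{j=0}^{min(μ,k)} C(μ,j) (k! ℓ^{μ−j}/(k−j)!) β^{k−j}`,
where `ε = |exp β − α|`. -/
noncomputable def wNum (α β : ℂ) (μ k ℓ : ℕ) : ℂ :=
  ((α ^ ℓ - Complex.exp (β * ℓ)) / (‖Complex.exp β - α‖ : ℂ)) *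
    ∑ j ∈ Finset.range (min μ k + 1),
      (μ.choose j : ℂ) * ((k.factorial : ℂ) * (ℓ : ℂ) ^ (μ - j) / ((k - j).factorial : ℂ)) *
        β ^ (k - j)

open Finset Nat

lemma norm_pow_sub_pow_le {A : Type*} [NormedCommRing A] [NormOneClass A] {a b : A} {R : ℝ}
    (ha : ‖a‖ ≤ R) (hb : ‖b‖ ≤ R) (n : ℕ) :
    ‖a ^ n - b ^ n‖ ≤ n * R ^ (n - 1) * ‖a - b‖ := by
  have hR : 0 ≤ R := (norm_nonneg a).trans ha
  rw [← geom_sum₂_mul]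
  refine (norm_mul_le _ _).trans (mul_le_mul_of_nonneg_right ?_ (norm_nonneg _))
  calc ‖∑ i ∈ range n, a ^ i * b ^ (n - 1 - i)‖ ≤ ∑ _i ∈ range n, R ^ (n - 1) := by
        refine norm_sum_le_of_le _ fun i hi => ?_
        calc ‖a ^ i * b ^ (n - 1 - i)‖ ≤ ‖a‖ ^ i * ‖b‖ ^ (n - 1 - i) :=
              (norm_mul_le _ _).trans <|
                mul_le_mul (norm_pow_le _ _) (norm_pow_le _ _) (norm_nonneg _) (by positivity)
          _ ≤ R ^ i * R ^ (n - 1 - i) := by gcongr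
          _ = R ^ (n - 1) := by rw [← pow_add]; grind
    _ = n * R ^ (n - 1) := by simp

lemma descFactorial_mul_pow_le_factorial_mul_exp {x : ℝ} (hx : 0 ≤ x) (k j : ℕ) :
    k.descFactorial j * x ^ (k - j) ≤ k ! * Real.exp x := by
  rcases le_or_gt j k with hjk | hkj
  · have hfac : ((k - j)! : ℝ) * k.descFactorial j = k ! := by
      exact_mod_cast factorial_mul_descFactorial hjk
    calc (k.descFactorial j : ℝ) * x ^ (k - j)
        = k ! * (x ^ (k - j) / (k - j)!) := by rw [← hfac]; field_simp
      _ ≤ k ! * Real.exp x := by gcongr; exact Real.pow_div_factorial_le_exp _ hx _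
  · rw [descFactorial_eq_zero_iff_lt.2 hkj, cast_zero, zero_mul]
    positivity

lemma sum_range_choose_mul_pow {R : Type*} [CommSemiring R] (μ : ℕ) (x : R) :
    ∑ j ∈ range (μ + 1), (μ.choose j : R) * x ^ (μ - j) = (x + 1) ^ μ := by
  rw [add_comm x 1, add_pow]
  exact sum_congr rfl fun j _ => by rw [one_pow, one_mul, mul_comm]

noncomputable def phiDerivPoly (k ℓ μ : ℕ) (z : ℂ) : ℂ :=
  ∑ j ∈ range (μ + 1), (μ.choose j : ℂ) * k.descFactorial j * (ℓ : ℂ) ^ (μ - j) * z ^ (k - j)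

lemma iteratedDeriv_Phi (k ℓ μ : ℕ) (z : ℂ) :
    iteratedDeriv μ (Phi k ℓ) z = phiDerivPoly k ℓ μ z * Complex.exp (ℓ * z) := by
  have hPhi : Phi k ℓ = (fun z : ℂ => z ^ k) * fun z => Complex.exp (ℓ * z) := rfl
  have hpow : ContDiffAt ℂ μ (fun z : ℂ => z ^ k) z := contDiffAt_id.pow k
  have hexp : ContDiffAt ℂ μ (fun z : ℂ => Complex.exp (ℓ * z)) z :=
    (contDiffAt_const.mul contDiffAt_id).cexp
  rw [hPhi, iteratedDeriv_mul hpow hexp, phiDerivPoly, sum_mul]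
  refine sum_congr rfl fun j _ => ?_
  rw [iteratedDeriv_pow, iteratedDeriv_cexp_const_mul]
  ring

lemma norm_phiDerivPoly_le (k ℓ μ : ℕ) (z : ℂ) :
    ‖phiDerivPoly k ℓ μ z‖ ≤ k ! * ((ℓ : ℝ) + 1) ^ μ * Real.exp ‖z‖ := by
  calc ‖phiDerivPoly k ℓ μ z‖
      ≤ ∑ j ∈ range (μ + 1), (μ.choose j : ℝ) * (ℓ : ℝ) ^ (μ - j) * (k ! * Real.exp ‖z‖) := by
        refine norm_sum_le_of_le _ fun j _ => ?_
        simp only [norm_mul, norm_pow, Complex.norm_natCast]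
        have := descFactorial_mul_pow_le_factorial_mul_exp (norm_nonneg z) k j
        calc (μ.choose j : ℝ) * k.descFactorial j * ℓ ^ (μ - j) * ‖z‖ ^ (k - j)
            = μ.choose j * ℓ ^ (μ - j) * (k.descFactorial j * ‖z‖ ^ (k - j)) := by ring
          _ ≤ _ := by gcongr
    _ = k ! * ((ℓ : ℝ) + 1) ^ μ * Real.exp ‖z‖ := by
        rw [← sum_mul, sum_range_choose_mul_pow]; ring

lemma norm_iteratedDeriv_Phi_le (k ℓ μ : ℕ) (z : ℂ) :
    ‖iteratedDeriv μ (Phi k ℓ) z‖ ≤ k ! * ((ℓ : ℝ) + 1) ^ μ * Real.exp ((ℓ + 1) * ‖z‖) := by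
  have hexp : ‖Complex.exp (ℓ * z)‖ ≤ Real.exp (ℓ * ‖z‖) := by
    simpa using Complex.norm_exp_le_exp_norm (ℓ * z)
  calc ‖iteratedDeriv μ (Phi k ℓ) z‖
      ≤ k ! * ((ℓ : ℝ) + 1) ^ μ * Real.exp ‖z‖ * Real.exp (ℓ * ‖z‖) := by
        rw [iteratedDeriv_Phi, norm_mul]
        exact mul_le_mul (norm_phiDerivPoly_le k ℓ μ z) hexp (norm_nonneg _) (by positivity)
    _ = k ! * ((ℓ : ℝ) + 1) ^ μ * Real.exp ((ℓ + 1) * ‖z‖) := by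
        rw [mul_assoc, ← Real.exp_add]; ring_nf

lemma wNum_eq (α β : ℂ) (μ k ℓ : ℕ) :
    wNum α β μ k ℓ =
      (α ^ ℓ - Complex.exp (β * ℓ)) / (‖Complex.exp β - α‖ : ℂ) * phiDerivPoly k ℓ μ β := by
  rw [wNum, phiDerivPoly]
  congr 1
  refine (sum_congr rfl fun j hj => ?_).trans
    (sum_subset (range_subset_range.2 (by omega)) fun j _ hj => ?_)
  · have hjk : j ≤ k := by grind
    have hfac : (k ! : ℂ) = (k - j)! * k.descFactorial j := by
      exact_mod_cast (factorial_mul_descFactorial hjk).symm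
    have hfac_ne : ((k - j)! : ℂ) ≠ 0 := cast_ne_zero.2 (factorial_ne_zero _)
    rw [hfac]
    field_simp
  · rw [descFactorial_eq_zero_iff_lt.2 (by grind)]
    simp

lemma norm_wNum_le (α β : ℂ) (μ k ℓ : ℕ) :
    ‖wNum α β μ k ℓ‖ ≤
      ℓ * (Real.exp ‖β‖ + ‖Complex.exp β - α‖) ^ ℓ * (k ! * ((ℓ : ℝ) + 1) ^ μ) := by
  set ε := ‖Complex.exp β - α‖
  set R := Real.exp ‖β‖ + ε
  have hexpβ : ‖Complex.exp β‖ ≤ Real.exp ‖β‖ := Complex.norm_exp_le_exp_norm β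
  have hα : ‖α‖ ≤ R := by
    calc ‖α‖ = ‖Complex.exp β - (Complex.exp β - α)‖ := by rw [sub_sub_cancel]
      _ ≤ ‖Complex.exp β‖ + ε := norm_sub_le _ _
      _ ≤ R := add_le_add hexpβ le_rfl
  have hR : Real.exp ‖β‖ ≤ R := le_add_of_nonneg_right (norm_nonneg _)
  have hprefactor : ‖(α ^ ℓ - Complex.exp (β * ℓ)) / (ε : ℂ)‖ ≤ ℓ * R ^ (ℓ - 1) := by
    rw [norm_div, Complex.norm_real, Real.norm_of_nonneg (norm_nonneg _)]
    -- `div_le_of_le_mul₀` also covers `ε = 0`, where the quotient is the junk value `0`.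
    refine div_le_of_le_mul₀ (norm_nonneg _) (by positivity) ?_
    rw [mul_comm β, Complex.exp_nat_mul, norm_sub_rev (Complex.exp β)]
    exact norm_pow_sub_pow_le hα (hexpβ.trans hR) ℓ
  calc ‖wNum α β μ k ℓ‖ ≤ ℓ * R ^ (ℓ - 1) * (k ! * ((ℓ : ℝ) + 1) ^ μ * Real.exp ‖β‖) := by
        rw [wNum_eq, norm_mul]
        exact mul_le_mul hprefactor (norm_phiDerivPoly_le k ℓ μ β) (norm_nonneg _) (by positivity)
    _ ≤ ℓ * R ^ (ℓ - 1) * (k ! * ((ℓ : ℝ) + 1) ^ μ * R) := by gcongr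
    _ = ℓ * R ^ ℓ * (k ! * ((ℓ : ℝ) + 1) ^ μ) := by
        rcases ℓ with _ | ℓ
        · simp
        · rw [add_tsub_cancel_right, pow_succ]; ring

lemma sum_range_factorial_le (n : ℕ) : ∑ k ∈ range n, k ! ≤ 2 * (n - 1)! := by
  induction n with
  | zero => simp
  | succ n ih =>
    rcases n with _ | _ | n
    · simp
    · simp [sum_range_succ]
    · have hstep : 2 * (n + 1)! ≤ (n + 2)! := by
        rw [factorial_succ (n + 1)]
        exact Nat.mul_le_mul_right _ (by omega)
      have ih : ∑ k ∈ range (n + 2), k ! ≤ 2 * (n + 1)! := ih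
      show ∑ k ∈ range (n + 2 + 1), k ! ≤ 2 * (n + 2)!
      rw [sum_range_succ]
      omega

lemma sum_range_sum_range_le {K L μ : ℕ} {C : ℝ} (hC : 0 ≤ C) (f : ℕ → ℕ → ℝ)
    (hf : ∀ k < K, ∀ ℓ < L, f k ℓ ≤ k ! * ((ℓ : ℝ) + 1) ^ μ * C) :
    ∑ k ∈ range K, ∑ ℓ ∈ range L, f k ℓ ≤ 2 * (K - 1)! * ((L : ℝ) + 1) ^ (μ + 1) * C := by
  have hfac : ∑ k ∈ range K, (k ! : ℝ) ≤ 2 * (K - 1)! := by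
    exact_mod_cast sum_range_factorial_le K
  calc ∑ k ∈ range K, ∑ ℓ ∈ range L, f k ℓ
      ≤ ∑ k ∈ range K, ∑ _ℓ ∈ range L, k ! * ((L : ℝ) + 1) ^ μ * C := by
        gcongr with k hk ℓ hℓ
        refine (hf k (mem_range.1 hk) ℓ (mem_range.1 hℓ)).trans ?_
        have : (ℓ : ℝ) ≤ L := by exact_mod_cast (mem_range.1 hℓ).le
        gcongr
    _ = (∑ k ∈ range K, (k ! : ℝ)) * (L * ((L : ℝ) + 1) ^ μ * C) := by
        simp only [sum_const, card_range, nsmul_eq_mul, sum_mul]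
        exact sum_congr rfl fun _ _ => by ring
    _ ≤ 2 * (K - 1)! * (((L : ℝ) + 1) * ((L : ℝ) + 1) ^ μ * C) := by
        gcongr
        linarith
    _ = 2 * (K - 1)! * ((L : ℝ) + 1) ^ (μ + 1) * C := by ring

lemma natCast_mul_pow_le_exp {R : ℝ} (hR : 1 ≤ R) {ℓ L : ℕ} (hℓ : ℓ < L) :
    ℓ * R ^ ℓ ≤ Real.exp (Real.log ((L : ℝ) - 1) + ((L : ℝ) - 1) * Real.log R) := by
  have hℓL : (ℓ : ℝ) ≤ L - 1 := by
    have : (ℓ : ℝ) + 1 ≤ L := by exact_mod_cast hℓ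
    linarith
  rw [Real.exp_add]
  gcongr
  · exact hℓL.trans (Real.le_exp_log _)
  · calc R ^ ℓ = Real.exp (ℓ * Real.log R) := by rw [Real.exp_nat_mul, Real.exp_log (by linarith)]
      _ ≤ Real.exp (((L : ℝ) - 1) * Real.log R) := by
        gcongr
        exact Real.log_nonneg hR

theorem stmt19_general (α β : ℂ) (E : ℝ) (K L : ℕ) (μ : ℕ) :
    max
      (∑ k ∈ Finset.range K, ∑ ℓ ∈ Finset.range L,
        ⨆ z : Metric.sphere (0 : ℂ) E, ‖iteratedDeriv μ (Phi k ℓ) ((z : ℂ) * β)‖)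
      (∑ k ∈ Finset.range K, ∑ ℓ ∈ Finset.range L, ‖wNum α β μ k ℓ‖) ≤
    Real.exp
      (max (E * ‖β‖ * L)
          (Real.log ((L : ℝ) - 1) +
            ((L : ℝ) - 1) *
              Real.log (Real.exp (‖β‖) + ‖Complex.exp β - α‖)) +
        Real.log ((K - 1).factorial) + ((μ : ℝ) + 1) * Real.log ((L : ℝ) + 1) +
        Real.log 2) := by
  set R := Real.exp ‖β‖ + ‖Complex.exp β - α‖
  set M := max (E * ‖β‖ * L) (Real.log ((L : ℝ) - 1) + ((L : ℝ) - 1) * Real.log R)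
  have hrhs : Real.exp (M + Real.log ((K - 1)! : ℝ) + ((μ : ℝ) + 1) * Real.log ((L : ℝ) + 1) +
      Real.log 2) = 2 * (K - 1)! * ((L : ℝ) + 1) ^ (μ + 1) * Real.exp M := by
    rw [Real.exp_add, Real.exp_add, Real.exp_add, ← Nat.cast_add_one, Real.exp_nat_mul,
      Real.exp_log (by positivity), Real.exp_log (by positivity), Real.exp_log two_pos]
    ring
  rw [hrhs]
  refine max_le (sum_range_sum_range_le (Real.exp_pos M).le _ fun k _ ℓ hℓ => ?_)
    (sum_range_sum_range_le (Real.exp_pos M).le _ fun k _ ℓ hℓ => ?_)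
  · refine Real.iSup_le (fun z => ?_) (by positivity)
    have hz : ‖(z : ℂ) * β‖ = E * ‖β‖ := by rw [norm_mul, mem_sphere_zero_iff_norm.1 z.2]
    refine (norm_iteratedDeriv_Phi_le k ℓ μ _).trans ?_
    gcongr
    calc ((ℓ : ℝ) + 1) * ‖(z : ℂ) * β‖ ≤ L * ‖(z : ℂ) * β‖ := by gcongr; exact_mod_cast hℓ
      _ = E * ‖β‖ * L := by rw [hz]; ring
      _ ≤ M := le_max_left _ _
  · have hR : 1 ≤ R := le_add_of_le_of_nonneg (Real.one_le_exp (norm_nonneg β)) (norm_nonneg _)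
    refine (norm_wNum_le α β μ k ℓ).trans ?_
    rw [mul_comm]
    gcongr
    exact (natCast_mul_pow_le_exp hR hℓ).trans (Real.exp_le_exp.2 (le_max_right _ _))

theorem stmt19 (α β : ℂ) (hβ : β ≠ 0) (hε : 0 < ‖Complex.exp β - α‖)
    (E : ℝ) (hE : 1 < E) (K L : ℕ) (hK : 1 ≤ K) (hL : 2 ≤ L) (μ : ℕ) :
    max
      (∑ k ∈ Finset.range K, ∑ ℓ ∈ Finset.range L,
        ⨆ z : Metric.sphere (0 : ℂ) E, ‖iteratedDeriv μ (Phi k ℓ) ((z : ℂ) * β)‖)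
      (∑ k ∈ Finset.range K, ∑ ℓ ∈ Finset.range L, ‖wNum α β μ k ℓ‖) ≤
    Real.exp
      (max (E * ‖β‖ * L)
          (Real.log ((L : ℝ) - 1) +
            ((L : ℝ) - 1) *
              Real.log (Real.exp (‖β‖) + ‖Complex.exp β - α‖)) +
        Real.log ((K - 1).factorial) + ((μ : ℝ) + 1) * Real.log ((L : ℝ) + 1) +
        Real.log 2) :=
  stmt19_general α β E K L μ
end
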